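/- arXiv:2507.16399 — 5 statements merged into one kernel-verified Lean document; each statement's English description precedes it below -/
import Mathlib

section
/- Let m, n ≥ 2 and let f be an m×n biquadratic form. Define h : ℝ^{m−1} × ℝ^{n−1} × ℝ → ℝ by h(x, y, z) = f((x,z), (y,z)), where (x,z) ∈ ℝ^m denotes the vector whose first m−1 coordinates are those of x and whose last coordinate is z (and similarly for (y,z) ∈ ℝ^n). Then f is positive semidefinite if and only if h(x, y, z) ≥ 0 for all x ∈ ℝ^{m−1}, y ∈ ℝ^{n−1}, z ∈ ℝ. -/
/-- For an m×n biquadratic form `f` (m, n ≥ 2, here m+1 and n+1 with m, n ≥ 1),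
the form `f` is psd iff the tripartite form `h(x,y,z) = f((x,z),(y,z))` is nonnegative. -/
theorem biquadratic_psd_iff_tripartite_nonneg
    (m n : ℕ) (hm : 1 ≤ m) (hn : 1 ≤ n)
    (f : (Fin (m + 1) → ℝ) → (Fin (n + 1) → ℝ) → ℝ)
    (a : Fin (m + 1) → Fin (m + 1) → Fin (n + 1) → Fin (n + 1) → ℝ)
    (hf : ∀ x y, f x y = ∑ i, ∑ j, ∑ k, ∑ l, a i j k l * x i * x j * y k * y l)
    (h : (Fin m → ℝ) → (Fin n → ℝ) → ℝ → ℝ)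
    (hh : ∀ x y z, h x y z = f (Fin.snoc x z) (Fin.snoc y z)) :
    (∀ x y, 0 ≤ f x y) ↔ (∀ x y z, 0 ≤ h x y z) := by
  constructor
  · intro hpsd x y z
    rw [hh]; exact hpsd _ _
  · intro hnn
    -- scaling lemmas
    have hsc1 : ∀ (x : Fin (m+1) → ℝ) (y : Fin (n+1) → ℝ) (t : ℝ),
        f (t • x) y = t ^ 2 * f x y := by
      intro x y t
      simp only [hf, Pi.smul_apply, smul_eq_mul, Finset.mul_sum]
      exact Finset.sum_congr rfl fun i _ => Finset.sum_congr rfl fun j _ =>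
        Finset.sum_congr rfl fun k _ => Finset.sum_congr rfl fun l _ => by ring
    have hsc2 : ∀ (x : Fin (m+1) → ℝ) (y : Fin (n+1) → ℝ) (t : ℝ),
        f x (t • y) = t ^ 2 * f x y := by
      intro x y t
      simp only [hf, Pi.smul_apply, smul_eq_mul, Finset.mul_sum]
      exact Finset.sum_congr rfl fun i _ => Finset.sum_congr rfl fun j _ =>
        Finset.sum_congr rfl fun k _ => Finset.sum_congr rfl fun l _ => by ring
    -- continuity of f (uncurried)
    have hfc : Continuous fun p : (Fin (m+1) → ℝ) × (Fin (n+1) → ℝ) => f p.1 p.2 := by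
      simp only [hf]; fun_prop
    -- continuity of snoc in the last coordinate
    have hsnocm : ∀ u : Fin m → ℝ, Continuous fun t : ℝ => (Fin.snoc u t : Fin (m+1) → ℝ) := by
      intro u
      apply continuous_pi
      intro i
      refine Fin.lastCases ?_ ?_ i
      · simpa [Fin.snoc_last] using continuous_id'
      · intro j; simpa [Fin.snoc_castSucc] using continuous_const
    have hsnocn : ∀ u : Fin n → ℝ, Continuous fun t : ℝ => (Fin.snoc u t : Fin (n+1) → ℝ) := by
      intro u
      apply continuous_pi
      intro i
      refine Fin.lastCases ?_ ?_ i
      · simpa [Fin.snoc_last] using continuous_id'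
      · intro j; simpa [Fin.snoc_castSucc] using continuous_const
    -- Case A: both last coordinates nonzero
    have claim1 : ∀ x y, x (Fin.last m) ≠ 0 → y (Fin.last n) ≠ 0 → 0 ≤ f x y := by
      intro x y hx hy
      set c := x (Fin.last m) with hc
      set d := y (Fin.last n) with hd
      set x' := c⁻¹ • x with hx'
      set y' := d⁻¹ • y with hy'
      have hxx : x = c • x' := by
        rw [hx', smul_smul, mul_inv_cancel₀ hx, one_smul]
      have hyy : y = d • y' := by
        rw [hy', smul_smul, mul_inv_cancel₀ hy, one_smul]
      have hfxy : f x y = c ^ 2 * (d ^ 2 * f x' y') := by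
        conv_lhs => rw [hxx, hyy]
        rw [hsc1, hsc2]
      have hx'1 : x' (Fin.last m) = 1 := by
        simp [hx', inv_mul_cancel₀ hx]; exact inv_mul_cancel₀ hx
      have hy'1 : y' (Fin.last n) = 1 := by
        simp [hy', inv_mul_cancel₀ hy]; exact inv_mul_cancel₀ hy
      have key : 0 ≤ f x' y' := by
        have := hnn (Fin.init x') (Fin.init y') 1
        rw [hh] at this
        rw [show (Fin.snoc (Fin.init x') 1 : Fin (m+1) → ℝ) = x' by
              rw [← hx'1, Fin.snoc_init_self],
            show (Fin.snoc (Fin.init y') 1 : Fin (n+1) → ℝ) = y' by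
              rw [← hy'1, Fin.snoc_init_self]] at this
        exact this
      rw [hfxy]
      positivity
    -- Case B: x's last coordinate nonzero
    have claim2 : ∀ x y, x (Fin.last m) ≠ 0 → 0 ≤ f x y := by
      intro x y hx
      by_cases hy : y (Fin.last n) = 0
      · set g : ℝ → ℝ := fun t => f x (Fin.snoc (Fin.init y) t) with hg
        have hgc : Continuous g := by
          exact hfc.comp (continuous_const.prodMk (hsnocn (Fin.init y)))
        have hg0 : g 0 = f x y := by
          rw [hg]; simp only
          rw [← hy, Fin.snoc_init_self]
        have hev : ∀ᶠ t in nhdsWithin (0:ℝ) {(0:ℝ)}ᶜ, 0 ≤ g t := by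
          filter_upwards [self_mem_nhdsWithin] with t ht
          exact claim1 x _ hx (by simpa [Fin.snoc_last] using ht)
        have hlim : Filter.Tendsto g (nhdsWithin (0:ℝ) {(0:ℝ)}ᶜ) (nhds (g 0)) :=
          (hgc.tendsto 0).mono_left nhdsWithin_le_nhds
        have := ge_of_tendsto hlim hev
        rw [hg0] at this
        exact this
      · exact claim1 x y hx hy
    intro x y
    by_cases hx : x (Fin.last m) = 0
    · set g : ℝ → ℝ := fun t => f (Fin.snoc (Fin.init x) t) y with hg
      have hgc : Continuous g := by
        exact hfc.comp ((hsnocm (Fin.init x)).prodMk continuous_const)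
      have hg0 : g 0 = f x y := by
        rw [hg]; simp only
        rw [← hx, Fin.snoc_init_self]
      have hev : ∀ᶠ t in nhdsWithin (0:ℝ) {(0:ℝ)}ᶜ, 0 ≤ g t := by
        filter_upwards [self_mem_nhdsWithin] with t ht
        exact claim2 _ y (by simpa [Fin.snoc_last] using ht)
      have hlim : Filter.Tendsto g (nhdsWithin (0:ℝ) {(0:ℝ)}ᶜ) (nhds (g 0)) :=
        (hgc.tendsto 0).mono_left nhdsWithin_le_nhds
      have := ge_of_tendsto hlim hev
      rw [hg0] at this
      exact this
    · exact claim2 x y hx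
end

section
/- Let m, n ≥ 2, let f be an m×n biquadratic form, and define h : ℝ^{m−1} × ℝ^{n−1} × ℝ → ℝ by h(x, y, z) = f((x,z), (y,z)), where (x,z) ∈ ℝ^m denotes the vector whose first m−1 coordinates are those of x and whose last coordinate is z (and similarly for (y,z) ∈ ℝ^n). Then for every natural number K: f is a sum of K squares of bilinear forms if and only if h is a sum of K squares of quadratic forms on ℝ^{m−1} × ℝ^{n−1} × ℝ. In particular, f and h have the same sos rank. -/
/-- A bilinear form on ℝ^m × ℝ^n. -/
def IsBilinearForm (m n : ℕ) (b : (Fin m → ℝ) → (Fin n → ℝ) → ℝ) : Prop :=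
  ∃ c : Fin m → Fin n → ℝ, ∀ x y, b x y = ∑ i, ∑ k, c i k * x i * y k

/-- `f` is a sum of `K` squares of bilinear forms. -/
def IsSumSqBilinear (m n K : ℕ) (f : (Fin m → ℝ) → (Fin n → ℝ) → ℝ) : Prop :=
  ∃ b : Fin K → (Fin m → ℝ) → (Fin n → ℝ) → ℝ,
    (∀ k, IsBilinearForm m n (b k)) ∧ ∀ x y, f x y = ∑ k, (b k x y) ^ 2

/-- A quadratic form on ℝ^m × ℝ^n × ℝ in the combined variables (x, y, z). -/
def IsQuadFormXYZ (m n : ℕ) (q : (Fin m → ℝ) → (Fin n → ℝ) → ℝ → ℝ) : Prop :=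
  ∃ (A : Fin m → Fin m → ℝ) (B : Fin n → Fin n → ℝ) (D : Fin m → Fin n → ℝ)
    (E : Fin m → ℝ) (F : Fin n → ℝ) (c : ℝ),
    ∀ x y z, q x y z =
      (∑ i, ∑ j, A i j * x i * x j) + (∑ k, ∑ l, B k l * y k * y l)
        + (∑ i, ∑ k, D i k * x i * y k)
        + (∑ i, E i * x i) * z + (∑ k, F k * y k) * z + c * z ^ 2

/-- `h` is a sum of `K` squares of quadratic forms on ℝ^m × ℝ^n × ℝ. -/
def IsSumSqQuadXYZ (m n K : ℕ) (h : (Fin m → ℝ) → (Fin n → ℝ) → ℝ → ℝ) : Prop :=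
  ∃ q : Fin K → (Fin m → ℝ) → (Fin n → ℝ) → ℝ → ℝ,
    (∀ k, IsQuadFormXYZ m n (q k)) ∧ ∀ x y z, h x y z = ∑ k, (q k x y z) ^ 2



@[fun_prop]
lemma cont_snoc (n : ℕ) (y : Fin n → ℝ) (k : Fin (n+1)) :
    Continuous fun t : ℝ => (Fin.snoc y t : Fin (n+1) → ℝ) k := by
  refine Fin.lastCases (motive := fun k => Continuous fun t : ℝ => (Fin.snoc y t : Fin (n+1) → ℝ) k) ?_ ?_ k
  · simpa using continuous_id'
  · intro i
    simp only [Fin.snoc_castSucc]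
    exact continuous_const

lemma zero_of_ne_zero {g : ℝ → ℝ} (hc : Continuous g) (h : ∀ t, t ≠ 0 → g t = 0) :
    ∀ t, g t = 0 := by
  have : g = fun _ => (0:ℝ) :=
    hc.ext_on (dense_compl_singleton (0:ℝ)) continuous_const (fun t ht => h t ht)
  exact fun t => congrFun this t

lemma snoc_smul {m : ℕ} (x : Fin m → ℝ) (s : ℝ) (hs : s ≠ 0) :
    (Fin.snoc x s : Fin (m+1) → ℝ) = s • (Fin.snoc (s⁻¹ • x) 1 : Fin (m+1) → ℝ) := by
  funext j
  refine Fin.lastCases (motive := fun j => (Fin.snoc x s : Fin (m+1) → ℝ) j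
    = (s • (Fin.snoc (s⁻¹ • x) 1 : Fin (m+1) → ℝ)) j) ?_ ?_ j
  · simp
  · intro i
    simp only [Fin.snoc_castSucc, Pi.smul_apply, smul_eq_mul]
    field_simp

lemma bilinear_ext {m n K : ℕ}
    (f : (Fin (m+1) → ℝ) → (Fin (n+1) → ℝ) → ℝ)
    (a : Fin (m + 1) → Fin (m + 1) → Fin (n + 1) → Fin (n + 1) → ℝ)
    (hf : ∀ x y, f x y = ∑ i, ∑ j, ∑ k, ∑ l, a i j k l * x i * x j * y k * y l)
    (b : Fin K → (Fin (m+1) → ℝ) → (Fin (n+1) → ℝ) → ℝ)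
    (c : Fin K → Fin (m+1) → Fin (n+1) → ℝ)
    (hb : ∀ k x y, b k x y = ∑ i, ∑ kk, c k i kk * x i * y kk)
    (hbase : ∀ x y z, f (Fin.snoc x z) (Fin.snoc y z) = ∑ k, (b k (Fin.snoc x z) (Fin.snoc y z))^2) :
    ∀ x y, f x y = ∑ k, (b k x y)^2 := by
  -- scaling laws
  have hfs : ∀ (s t : ℝ) (x : Fin (m+1) → ℝ) (y : Fin (n+1) → ℝ),
      f (s • x) (t • y) = s^2 * t^2 * f x y := by
    intro s t x y
    rw [hf, hf]
    simp only [Finset.mul_sum]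
    refine Finset.sum_congr rfl fun i _ => Finset.sum_congr rfl fun j _ =>
      Finset.sum_congr rfl fun kk _ => Finset.sum_congr rfl fun l _ => ?_
    simp only [Pi.smul_apply, smul_eq_mul]
    ring
  have hbs : ∀ (k : Fin K) (s t : ℝ) (x : Fin (m+1) → ℝ) (y : Fin (n+1) → ℝ),
      b k (s • x) (t • y) = s * t * b k x y := by
    intro k s t x y
    rw [hb, hb]
    simp only [Finset.mul_sum]
    refine Finset.sum_congr rfl fun i _ => Finset.sum_congr rfl fun kk _ => ?_
    simp only [Pi.smul_apply, smul_eq_mul]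
    ring
  -- stage 1: both last coordinates nonzero
  have h1 : ∀ (x : Fin m → ℝ) (y : Fin n → ℝ) (s t : ℝ), s ≠ 0 → t ≠ 0 →
      f (Fin.snoc x s) (Fin.snoc y t) = ∑ k, (b k (Fin.snoc x s) (Fin.snoc y t))^2 := by
    intro x y s t hs ht
    rw [snoc_smul x s hs, snoc_smul y t ht, hfs, hbase]
    rw [Finset.mul_sum]
    refine Finset.sum_congr rfl fun k _ => ?_
    rw [hbs]
    ring
  -- stage 2: only first last coordinate nonzero
  have h2 : ∀ (x : Fin m → ℝ) (s : ℝ), s ≠ 0 → ∀ (y : Fin n → ℝ) (t : ℝ),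
      f (Fin.snoc x s) (Fin.snoc y t) = ∑ k, (b k (Fin.snoc x s) (Fin.snoc y t))^2 := by
    intro x s hs y
    have hcont : Continuous fun t : ℝ =>
        f (Fin.snoc x s) (Fin.snoc y t) - ∑ k, (b k (Fin.snoc x s) (Fin.snoc y t))^2 := by
      have heq : (fun t : ℝ =>
          f (Fin.snoc x s) (Fin.snoc y t) - ∑ k, (b k (Fin.snoc x s) (Fin.snoc y t))^2)
        = fun t : ℝ =>
          (∑ i, ∑ j, ∑ kk, ∑ l, a i j kk l * (Fin.snoc x s : Fin (m+1) → ℝ) i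
              * (Fin.snoc x s : Fin (m+1) → ℝ) j * (Fin.snoc y t : Fin (n+1) → ℝ) kk
              * (Fin.snoc y t : Fin (n+1) → ℝ) l)
          - ∑ k, (∑ i, ∑ kk, c k i kk * (Fin.snoc x s : Fin (m+1) → ℝ) i
              * (Fin.snoc y t : Fin (n+1) → ℝ) kk)^2 := by
        funext t
        rw [hf]
        congr 1
        exact Finset.sum_congr rfl fun k _ => by rw [hb]
      rw [heq]
      apply Continuous.sub
      · apply continuous_finset_sum; intro i _
        apply continuous_finset_sum; intro j _
        apply continuous_finset_sum; intro kk _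
        apply continuous_finset_sum; intro l _
        exact (continuous_const.mul (cont_snoc n y kk)).mul (cont_snoc n y l)
      · apply continuous_finset_sum; intro k _
        apply Continuous.pow
        apply continuous_finset_sum; intro i _
        apply continuous_finset_sum; intro kk _
        exact continuous_const.mul (cont_snoc n y kk)
    intro t
    have := zero_of_ne_zero hcont (fun t ht => by rw [h1 x y s t hs ht]; ring) t
    linarith [this]
  -- stage 3: all
  have h3 : ∀ (x : Fin m → ℝ) (s : ℝ) (y : Fin n → ℝ) (t : ℝ),
      f (Fin.snoc x s) (Fin.snoc y t) = ∑ k, (b k (Fin.snoc x s) (Fin.snoc y t))^2 := by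
    intro x s y t
    have hcont : Continuous fun s : ℝ =>
        f (Fin.snoc x s) (Fin.snoc y t) - ∑ k, (b k (Fin.snoc x s) (Fin.snoc y t))^2 := by
      have heq : (fun s : ℝ =>
          f (Fin.snoc x s) (Fin.snoc y t) - ∑ k, (b k (Fin.snoc x s) (Fin.snoc y t))^2)
        = fun s : ℝ =>
          (∑ i, ∑ j, ∑ kk, ∑ l, a i j kk l * (Fin.snoc x s : Fin (m+1) → ℝ) i
              * (Fin.snoc x s : Fin (m+1) → ℝ) j * (Fin.snoc y t : Fin (n+1) → ℝ) kk
              * (Fin.snoc y t : Fin (n+1) → ℝ) l)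
          - ∑ k, (∑ i, ∑ kk, c k i kk * (Fin.snoc x s : Fin (m+1) → ℝ) i
              * (Fin.snoc y t : Fin (n+1) → ℝ) kk)^2 := by
        funext s
        rw [hf]
        congr 1
        exact Finset.sum_congr rfl fun k _ => by rw [hb]
      rw [heq]
      apply Continuous.sub
      · apply continuous_finset_sum; intro i _
        apply continuous_finset_sum; intro j _
        apply continuous_finset_sum; intro kk _
        apply continuous_finset_sum; intro l _
        exact (((continuous_const.mul (cont_snoc m x i)).mul (cont_snoc m x j)).mul
          continuous_const).mul continuous_const
      · apply continuous_finset_sum; intro k _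
        apply Continuous.pow
        apply continuous_finset_sum; intro i _
        apply continuous_finset_sum; intro kk _
        exact (continuous_const.mul (cont_snoc m x i)).mul continuous_const
    have := zero_of_ne_zero hcont (fun s hs => by rw [h2 x s hs y t]; ring) s
    linarith [this]
  intro x y
  have := h3 (Fin.init x) (x (Fin.last m)) (Fin.init y) (y (Fin.last n))
  rwa [Fin.snoc_init_self, Fin.snoc_init_self] at this
lemma sum_sq_eq_zero' {K : ℕ} (g : Fin K → ℝ) (h : ∑ k, (g k)^2 = 0) (k : Fin K) : g k = 0 := by
  have := (Finset.sum_eq_zero_iff_of_nonneg (fun i _ => sq_nonneg (g i))).1 h k (Finset.mem_univ k)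
  exact pow_eq_zero_iff (two_ne_zero) |>.1 this

lemma snoc_bilinear_eval {m n : ℕ} (c : Fin (m+1) → Fin (n+1) → ℝ) (x : Fin m → ℝ)
    (y : Fin n → ℝ) (z : ℝ) :
    ∑ i, ∑ k, c i k * (Fin.snoc x z : Fin (m+1) → ℝ) i * (Fin.snoc y z : Fin (n+1) → ℝ) k
    = (∑ i : Fin m, ∑ k : Fin n, c i.castSucc k.castSucc * x i * y k)
      + (∑ i : Fin m, c i.castSucc (Fin.last n) * x i) * z
      + (∑ k : Fin n, c (Fin.last m) k.castSucc * y k) * z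
      + c (Fin.last m) (Fin.last n) * z^2 := by
  rw [Fin.sum_univ_castSucc]
  simp only [Fin.sum_univ_castSucc (n := n), Fin.snoc_castSucc, Fin.snoc_last]
  simp only [Finset.sum_add_distrib, Finset.sum_mul]
  rw [show (∑ k : Fin n, c (Fin.last m) k.castSucc * z * y k)
      = ∑ k : Fin n, c (Fin.last m) k.castSucc * y k * z from
    Finset.sum_congr rfl fun k _ => by ring]
  ring

lemma snoc_zero_fun {n : ℕ} : (Fin.snoc (0 : Fin n → ℝ) (0:ℝ) : Fin (n+1) → ℝ) = 0 := by
  funext j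
  refine Fin.lastCases (motive := fun j => (Fin.snoc (0 : Fin n → ℝ) (0:ℝ) : Fin (n+1) → ℝ) j = 0) ?_ ?_ j
  · simp
  · intro i; simp

/-- For an m×n biquadratic form `f` (m, n ≥ 2, here m+1 and n+1 with m, n ≥ 1)
and the associated tripartite form `h(x,y,z) = f((x,z),(y,z))`, for every K:
`f` is a sum of K squares of bilinear forms iff `h` is a sum of K squares of quadratic
forms on ℝ^{m−1} × ℝ^{n−1} × ℝ.  In particular, they have the same sos rank. -/
theorem biquadratic_sos_iff_tripartite_sos
    (m n : ℕ) (hm : 1 ≤ m) (hn : 1 ≤ n)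
    (f : (Fin (m + 1) → ℝ) → (Fin (n + 1) → ℝ) → ℝ)
    (a : Fin (m + 1) → Fin (m + 1) → Fin (n + 1) → Fin (n + 1) → ℝ)
    (hf : ∀ x y, f x y = ∑ i, ∑ j, ∑ k, ∑ l, a i j k l * x i * x j * y k * y l)
    (h : (Fin m → ℝ) → (Fin n → ℝ) → ℝ → ℝ)
    (hh : ∀ x y z, h x y z = f (Fin.snoc x z) (Fin.snoc y z))
    (K : ℕ) :
    IsSumSqBilinear (m + 1) (n + 1) K f ↔ IsSumSqQuadXYZ m n K h := by
  constructor
  · rintro ⟨b, hb, hsum⟩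
    choose c hc using hb
    refine ⟨fun k x y z => b k (Fin.snoc x z) (Fin.snoc y z), fun k => ?_, fun x y z => ?_⟩
    · refine ⟨0, 0, fun i kk => c k i.castSucc kk.castSucc,
        fun i => c k i.castSucc (Fin.last n), fun kk => c k (Fin.last m) kk.castSucc,
        c k (Fin.last m) (Fin.last n), fun x y z => ?_⟩
      beta_reduce
      rw [hc, snoc_bilinear_eval]
      simp only [Pi.zero_apply, zero_mul, Finset.sum_const_zero, zero_add]
    · rw [hh, hsum]
  · rintro ⟨q, hq, hsum⟩
    choose A B D E F c0 hq using hq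
    -- the pure-x parts vanish
    have hfy0 : ∀ x', f x' (0 : Fin (n+1) → ℝ) = 0 := by
      intro x'; rw [hf]; simp
    have hfx0 : ∀ y', f (0 : Fin (m+1) → ℝ) y' = 0 := by
      intro y'; rw [hf]; simp
    have hAk : ∀ k (x : Fin m → ℝ), ∑ i, ∑ j, A k i j * x i * x j = 0 := by
      intro k x
      have h0 : ∑ k, (q k x 0 0)^2 = 0 := by
        rw [← hsum, hh, snoc_zero_fun, hfy0]
      have := sum_sq_eq_zero' _ h0 k
      rw [hq] at this
      simpa using this
    have hBk : ∀ k (y : Fin n → ℝ), ∑ kk, ∑ l, B k kk l * y kk * y l = 0 := by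
      intro k y
      have h0 : ∑ k, (q k 0 y 0)^2 = 0 := by
        rw [← hsum, hh, snoc_zero_fun, hfx0]
      have := sum_sq_eq_zero' _ h0 k
      rw [hq] at this
      simpa using this
    -- build the bilinear forms
    set cmat : Fin K → Fin (m+1) → Fin (n+1) → ℝ := fun k =>
      Fin.snoc (fun i => (Fin.snoc (fun kk => D k i kk) (E k i) : Fin (n+1) → ℝ))
        (Fin.snoc (fun kk => F k kk) (c0 k)) with hcmat
    set b : Fin K → (Fin (m+1) → ℝ) → (Fin (n+1) → ℝ) → ℝ :=
      fun k x y => ∑ i, ∑ kk, cmat k i kk * x i * y kk with hbdef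
    have hcm1 : ∀ k (i : Fin m) (kk : Fin n), cmat k i.castSucc kk.castSucc = D k i kk := by
      intro k i kk; simp [hcmat]
    have hcm2 : ∀ k (i : Fin m), cmat k i.castSucc (Fin.last n) = E k i := by
      intro k i; simp [hcmat]
    have hcm3 : ∀ k (kk : Fin n), cmat k (Fin.last m) kk.castSucc = F k kk := by
      intro k kk; simp [hcmat]
    have hcm4 : ∀ k, cmat k (Fin.last m) (Fin.last n) = c0 k := by
      intro k; simp [hcmat]
    have hbq : ∀ k x y z, b k (Fin.snoc x z) (Fin.snoc y z) = q k x y z := by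
      intro k x y z
      rw [hbdef]
      beta_reduce
      rw [snoc_bilinear_eval, hq, hAk, hBk]
      simp only [hcm1, hcm2, hcm3, hcm4]
      ring
    have hbase : ∀ x y z, f (Fin.snoc x z) (Fin.snoc y z)
        = ∑ k, (b k (Fin.snoc x z) (Fin.snoc y z))^2 := by
      intro x y z
      rw [← hh, hsum]
      exact Finset.sum_congr rfl fun k _ => by rw [hbq]
    have hall := bilinear_ext f a hf b cmat (fun k x y => rfl) hbase
    exact ⟨b, fun k => ⟨cmat k, fun x y => rfl⟩, hall⟩
end

section
/- Let m ≥ 3 and let h be an (m−1)×1×1 degenerated tripartite quartic form, h(x, y, z) = h_2(x)z² + h_3(x)yz + h_4(x)y² + h_5(x)yz² + h_6(x)y²z + h_7 y²z², which is positive semidefinite. Then the function (x, y, z) ↦ h_2(x)z² + h_3(x)yz + h_4(x)y² is a positive semidefinite (m−1)×2 biquadratic form in the variable blocks x ∈ ℝ^{m−1} and (y,z) ∈ ℝ², and it can be expressed as a sum of at most 2(m−1) squares of bilinear forms b(x, (y,z)) = Σ_{i,k} c_{ik} x_i w_k (where w = (y,z)). -/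
open Polynomial
local notation "cconj" => (starRingEnd ℂ)

lemma quad_leading_nonneg {a b c : ℝ} (h : ∀ t : ℝ, 0 ≤ a*t^2 + b*t + c) : 0 ≤ a := by
  by_contra hneg
  push_neg at hneg
  have hna : -a ≠ 0 := by intro hz; rw [neg_eq_zero] at hz; exact absurd hz (ne_of_lt hneg)
  set t := Real.sqrt ((|c|+1)/(-a)) with ht
  have h1 := h t
  have h2 := h (-t)
  have htsq : t^2 = (|c|+1)/(-a) := Real.sq_sqrt (div_nonneg (by positivity) (by linarith))
  have ha0 : a ≠ 0 := ne_of_lt hneg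
  have hat : (-a) * t^2 = |c|+1 := by
    rw [htsq]; field_simp
  nlinarith [abs_nonneg c, le_abs_self c]

lemma lin_eq_zero {b c : ℝ} (h : ∀ t : ℝ, 0 ≤ b*t + c) : b = 0 := by
  by_contra hb
  have := h (-(c+1)/b)
  rw [mul_div_assoc'] at this
  rw [mul_comm, mul_div_assoc, div_self hb, mul_one] at this
  linarith

/-- A real polynomial that is nonnegative on ℝ is a sum of two squares. -/
lemma nonneg_poly_sum_two_sq (p : ℝ[X]) (hp : ∀ t : ℝ, 0 ≤ p.eval t) :
    ∃ e f : ℝ[X], p = e^2 + f^2 := by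
  suffices H : ∀ N (p : ℝ[X]), p.natDegree ≤ N → (∀ t : ℝ, 0 ≤ p.eval t) →
      ∃ e f : ℝ[X], p = e^2 + f^2 from H p.natDegree p le_rfl hp
  intro N
  induction N with
  | zero =>
    intro p hd hp
    obtain ⟨c, hc⟩ := Polynomial.natDegree_eq_zero.mp (Nat.le_zero.mp hd)
    have hc0 : 0 ≤ c := by have := hp 0; rw [← hc, eval_C] at this; exact this
    exact ⟨C (Real.sqrt c), 0, by
      rw [← hc, ← map_pow, Real.sq_sqrt hc0]; ring⟩
  | succ N ih =>
    intro p hd hp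
    by_cases h0 : p.natDegree = 0
    · obtain ⟨c, hc⟩ := Polynomial.natDegree_eq_zero.mp h0
      have hc0 : 0 ≤ c := by have := hp 0; rw [← hc, eval_C] at this; exact this
      exact ⟨C (Real.sqrt c), 0, by
        rw [← hc, ← map_pow, Real.sq_sqrt hc0]; ring⟩
    · have hp0 : p ≠ 0 := fun hz => h0 (by simp [hz])
      have hdegpos : 0 < (p.map Complex.ofRealHom).degree := by
        rw [Polynomial.degree_map_eq_of_injective Complex.ofReal_injective]
        exact Polynomial.natDegree_pos_iff_degree_pos.mp (Nat.pos_of_ne_zero h0)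
      obtain ⟨α, hα⟩ := Complex.exists_root hdegpos
      by_cases him : α.im = 0
      · -- real root
        set a := α.re with ha
        have hαa : α = (a : ℂ) := by
          apply Complex.ext <;> simp [him, ha]
        have hpa : p.eval a = 0 := by
          have h1 : (p.map Complex.ofRealHom).eval ((a : ℝ) : ℂ) = ((p.eval a : ℝ) : ℂ) := by
            rw [Polynomial.eval_map]
            exact Polynomial.eval₂_at_apply Complex.ofRealHom a
          have h2 : (p.map Complex.ofRealHom).eval α = 0 := hα
          rw [hαa] at h2
          have h3 : ((p.eval a : ℝ) : ℂ) = 0 := by rw [← h1]; exact h2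
          exact_mod_cast h3
        obtain ⟨q, hq⟩ := (Polynomial.dvd_iff_isRoot.mpr hpa)
        have hqa : q.eval a = 0 := by
          by_contra hqa
          have hcont : ContinuousAt (fun t : ℝ => q.eval t) a :=
            (Polynomial.continuous q).continuousAt
          rw [Metric.continuousAt_iff] at hcont
          obtain ⟨δ, hδ, hδ2⟩ := hcont |q.eval a| (abs_pos.mpr hqa)
          rcases lt_or_gt_of_ne hqa with hneg|hpos
          · have hdist : dist (a + δ/2) a < δ := by
              rw [Real.dist_eq, show a + δ/2 - a = δ/2 by ring, abs_of_pos (by linarith)]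
              linarith
            have hclose := hδ2 hdist
            rw [Real.dist_eq] at hclose
            have h3 : q.eval (a + δ/2) < 0 := by
              have := abs_sub_lt_iff.mp hclose
              rw [abs_of_neg hneg] at this
              linarith [this.1, this.2]
            have hlt : p.eval (a + δ/2) < 0 := by
              rw [hq]
              simp only [eval_mul, eval_sub, eval_X, eval_C]
              rw [show a + δ/2 - a = δ/2 by ring]
              exact mul_neg_of_pos_of_neg (by linarith) h3
            exact absurd (hp (a + δ/2)) (not_le.mpr hlt)
          · have hdist : dist (a - δ/2) a < δ := by
              rw [Real.dist_eq, show a - δ/2 - a = -(δ/2) by ring, abs_neg,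
                abs_of_pos (by linarith)]
              linarith
            have hclose := hδ2 hdist
            rw [Real.dist_eq] at hclose
            have h3 : q.eval (a - δ/2) > 0 := by
              have := abs_sub_lt_iff.mp hclose
              rw [abs_of_pos hpos] at this
              linarith [this.1, this.2]
            have hlt : p.eval (a - δ/2) < 0 := by
              rw [hq]
              simp only [eval_mul, eval_sub, eval_X, eval_C]
              rw [show a - δ/2 - a = -(δ/2) by ring]
              exact mul_neg_of_neg_of_pos (by linarith) h3
            exact absurd (hp (a - δ/2)) (not_le.mpr hlt)
        obtain ⟨q₁, hq₁⟩ := (Polynomial.dvd_iff_isRoot.mpr hqa)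
        have hpfac : p = (X - C a)^2 * q₁ := by rw [hq, hq₁]; ring
        have hq₁ne : q₁ ≠ 0 := by
          intro hz; rw [hz, mul_zero] at hpfac; exact hp0 hpfac
        have hq₁nn_ne : ∀ t : ℝ, t ≠ a → 0 ≤ q₁.eval t := by
          intro t hta
          have h2 : (0:ℝ) < (t - a)^2 :=
            lt_of_le_of_ne (sq_nonneg _) (Ne.symm (pow_ne_zero 2 (sub_ne_zero.mpr hta)))
          have hpt : p.eval t = (t-a)^2 * q₁.eval t := by rw [hpfac]; simp
          have := hp t
          rw [hpt] at this
          exact (mul_nonneg_iff_of_pos_left h2).mp this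
        have hq₁nn : ∀ t : ℝ, 0 ≤ q₁.eval t := by
          intro t
          by_cases hta : t = a
          · subst hta
            by_contra hng
            push_neg at hng
            have hcont : ContinuousAt (fun s : ℝ => q₁.eval s) a :=
              (Polynomial.continuous q₁).continuousAt
            rw [Metric.continuousAt_iff] at hcont
            obtain ⟨δ, hδ, hδ2⟩ := hcont (-(q₁.eval a)) (by linarith)
            have hdist : dist (a + δ/2) a < δ := by
              rw [Real.dist_eq, show a + δ/2 - a = δ/2 by ring, abs_of_pos (by linarith)]
              linarith
            have hclose := hδ2 hdist
            rw [Real.dist_eq] at hclose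
            have h3 : q₁.eval (a + δ/2) < 0 := by
              have := abs_sub_lt_iff.mp hclose
              linarith [this.1, this.2]
            have h4 := hq₁nn_ne (a + δ/2) (by intro hh; linarith)
            linarith
          · exact hq₁nn_ne t hta
        have hdeg : q₁.natDegree ≤ N := by
          have hXa : ((X - C a)^2 : ℝ[X]) ≠ 0 := pow_ne_zero 2 (X_sub_C_ne_zero a)
          have := Polynomial.natDegree_mul hXa hq₁ne
          rw [← hpfac] at this
          have h2 : ((X - C a)^2 : ℝ[X]).natDegree = 2 := by
            rw [Polynomial.natDegree_pow, Polynomial.natDegree_X_sub_C]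
          omega
        obtain ⟨e, f, hef⟩ := ih q₁ hdeg hq₁nn
        exact ⟨(X - C a) * e, (X - C a) * f, by rw [hpfac, hef]; ring⟩
      · -- complex root: α.im ≠ 0
        set a := α.re with ha
        set b := α.im with hb
        set Q : ℝ[X] := (X - C a)^2 + C (b^2) with hQ
        have hdQ1 : (((X - C a)^2 : ℝ[X])).degree = 2 := by
          rw [Polynomial.degree_pow, Polynomial.degree_X_sub_C]; rfl
        have hQmonic : Q.Monic := by
          apply ((monic_X_sub_C a).pow 2).add_of_left
          rw [hdQ1]
          exact lt_of_le_of_lt Polynomial.degree_C_le (by norm_num)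
        have hdQ : Q.degree = 2 := by
          rw [hQ, Polynomial.degree_add_eq_left_of_degree_lt, hdQ1]
          rw [hdQ1]
          exact lt_of_le_of_lt Polynomial.degree_C_le (by norm_num)
        have hQα : (Q.map Complex.ofRealHom).eval α = 0 := by
          have hmap : Q.map Complex.ofRealHom = (X - C (a:ℂ))^2 + C (((b:ℂ))^2) := by
            rw [hQ]
            rw [Polynomial.map_add, Polynomial.map_pow, Polynomial.map_sub,
              Polynomial.map_X, Polynomial.map_C, Polynomial.map_C]
            norm_num
          rw [hmap]
          simp only [eval_add, eval_pow, eval_sub, eval_X, eval_C]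
          have hαab : α - (a:ℂ) = (b:ℂ) * Complex.I := by
            apply Complex.ext <;> simp [ha, hb]
          rw [hαab, mul_pow, Complex.I_sq]
          ring
        set r := p %ₘ Q with hr
        have hdr : r.natDegree ≤ 1 := by
          have hlt := Polynomial.degree_modByMonic_lt p hQmonic
          rw [hdQ] at hlt
          rcases eq_or_ne r 0 with hz|hz
          · rw [hz]; simp
          · rw [Polynomial.degree_eq_natDegree hz] at hlt
            exact_mod_cast Nat.lt_succ_iff.mp (by exact_mod_cast hlt)
        have hrform := Polynomial.eq_X_add_C_of_natDegree_le_one hdr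
        have hpQr : p = Q * (p /ₘ Q) + r := by
          have h5 := Polynomial.modByMonic_add_div p Q
          linear_combination h5.symm
        have hrα : ((r.map Complex.ofRealHom)).eval α = 0 := by
          have h1 : (p.map Complex.ofRealHom).eval α = 0 := hα
          rw [hpQr, Polynomial.map_add, Polynomial.map_mul] at h1
          rw [eval_add, eval_mul, hQα, zero_mul, zero_add] at h1
          exact h1
        have hrboth : ((r.coeff 1 : ℂ)) * α + (r.coeff 0 : ℂ) = 0 := by
          rw [hrform] at hrα
          simpa using hrα
        have hr1 : r.coeff 1 = 0 := by
          have him2 := congrArg Complex.im hrboth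
          simp [Complex.add_im, Complex.mul_im] at him2
          rcases him2 with h|h
          · exact h
          · exact absurd h him
        have hr0 : r.coeff 0 = 0 := by
          rw [hr1] at hrboth
          simp at hrboth
          exact_mod_cast hrboth
        have hrz : r = 0 := by rw [hrform, hr1, hr0]; simp
        have hpfac : p = Q * (p /ₘ Q) := by conv_lhs => rw [hpQr, hrz, add_zero]
        set q₁ := p /ₘ Q with hq₁def
        have hQpos : ∀ t : ℝ, 0 < Q.eval t := by
          intro t
          rw [hQ]
          simp only [eval_add, eval_pow, eval_sub, eval_X, eval_C]
          have hb2 : (0:ℝ) < b^2 :=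
            lt_of_le_of_ne (sq_nonneg _) (Ne.symm (pow_ne_zero 2 him))
          nlinarith [sq_nonneg (t - a)]
        have hq₁nn : ∀ t : ℝ, 0 ≤ q₁.eval t := by
          intro t
          have hpt : p.eval t = Q.eval t * q₁.eval t := by rw [hpfac]; simp
          have := hp t
          rw [hpt] at this
          exact (mul_nonneg_iff_of_pos_left (hQpos t)).mp this
        have hq₁ne : q₁ ≠ 0 := by
          intro hz; rw [hz, mul_zero] at hpfac; exact hp0 hpfac
        have hdeg : q₁.natDegree ≤ N := by
          have hQne : Q ≠ 0 := hQmonic.ne_zero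
          have := Polynomial.natDegree_mul hQne hq₁ne
          rw [← hpfac] at this
          have h2 : Q.natDegree = 2 := Polynomial.natDegree_eq_of_degree_eq_some hdQ
          omega
        obtain ⟨e, f, hef⟩ := ih q₁ hdeg hq₁nn
        refine ⟨(X - C a) * e + C b * f, (X - C a) * f - C b * e, ?_⟩
        have hCb : (C (b^2) : ℝ[X]) = (C b)^2 := by rw [map_pow]
        rw [hpfac, hef, hQ, hCb]
        ring


set_option maxHeartbeats 1000000 in
/-- Existence of an orthogonal-projection matrix onto the span of the columns of `Z`,
killing the columns of `Y` when those are orthogonal to the columns of `Z`. -/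
lemma proj_matrix_exists {ρ : Type} [Fintype ρ] {n : ℕ}
    (Z Y : ρ → Fin n → ℂ)
    (horth : ∀ i j, ∑ r, cconj (Z r i) * Y r j = 0) :
    ∃ P : ρ → ρ → ℂ,
      (∀ r c, cconj (P r c) = P c r) ∧
      (∀ r s, ∑ c, P r c * P c s = P r s) ∧
      (∀ i r, ∑ c, P r c * Z c i = Z r i) ∧
      (∀ i r, ∑ c, P r c * Y c i = 0) := by
  classical
  let E := EuclideanSpace ℂ ρ
  let zv : Fin n → E := fun i => WithLp.toLp 2 (fun r => Z r i)
  let yv : Fin n → E := fun i => WithLp.toLp 2 (fun r => Y r i)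
  let K : Submodule ℂ E := Submodule.span ℂ (Set.range zv)
  let b := stdOrthonormalBasis ℂ K
  set d := Module.finrank ℂ K with hd
  let P : ρ → ρ → ℂ := fun r c => ∑ l : Fin d, ((b l : E) r) * cconj ((b l : E) c)
  -- inner products of basis vectors with a vector, expansion for members of K
  have hinner : ∀ (x : E) (w : E), (inner ℂ x w : ℂ) = ∑ c, cconj (x c) * w c := by
    intro x w
    rw [PiLp.inner_apply]
    simp only [RCLike.inner_apply, mul_comm]
  have hexp : ∀ (wK : K) (r : ρ),
      ∑ l : Fin d, ((b l : E) r) * (inner ℂ ((b l : E)) ((wK : E)) : ℂ) = (wK : E) r := by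
    intro wK r
    have hs := b.sum_repr wK
    have hs2 := congrArg (Subtype.val) hs
    rw [AddSubmonoidClass.coe_finset_sum] at hs2
    have hs3 := congrArg (fun v : E => v r) hs2
    rw [WithLp.ofLp_sum, Finset.sum_apply] at hs3
    calc ∑ l : Fin d, ((b l : E) r) * (inner ℂ ((b l : E)) ((wK : E)) : ℂ)
        = ∑ l : Fin d, ((b.repr wK l • (b l : K)) : E) r := by
          apply Finset.sum_congr rfl
          intro l _
          rw [PiLp.smul_apply, smul_eq_mul,
            OrthonormalBasis.repr_apply_apply, Submodule.coe_inner, mul_comm]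
      _ = (wK : E) r := hs3
  have hbK : ∀ l : Fin d, ((b l : E)) ∈ K := fun l => SetLike.coe_mem _
  have hKorth : ∀ i, ∀ w ∈ K, (inner ℂ w (yv i) : ℂ) = 0 := by
    intro i w hw
    induction hw using Submodule.span_induction with
    | mem x hx =>
      obtain ⟨j, hj⟩ := hx
      rw [← hj, hinner]
      exact horth j i
    | zero => rw [inner_zero_left]
    | add x y hx hy ihx ihy => rw [inner_add_left, ihx, ihy, add_zero]
    | smul a x hx ihx => rw [inner_smul_left, ihx, mul_zero]
  refine ⟨P, ?_, ?_, ?_, ?_⟩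
  · intro r c
    show cconj (∑ l : Fin d, ((b l : E) r) * cconj ((b l : E) c)) = _
    rw [map_sum]
    apply Finset.sum_congr rfl
    intro l _
    rw [map_mul, Complex.conj_conj, mul_comm]
  · intro r s
    show ∑ c, (∑ l : Fin d, ((b l : E) r) * cconj ((b l : E) c)) *
        (∑ m : Fin d, ((b m : E) c) * cconj ((b m : E) s)) = _
    have step : ∀ c, (∑ l : Fin d, ((b l : E) r) * cconj ((b l : E) c)) *
        (∑ m : Fin d, ((b m : E) c) * cconj ((b m : E) s))
        = ∑ l : Fin d, ∑ m : Fin d,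
            (((b l : E) r) * cconj ((b m : E) s)) * (cconj ((b l : E) c) * ((b m : E) c)) := by
      intro c
      rw [Finset.sum_mul_sum]
      apply Finset.sum_congr rfl; intro l _
      apply Finset.sum_congr rfl; intro m _
      ring
    rw [Finset.sum_congr rfl (fun c _ => step c)]
    rw [Finset.sum_comm]
    have step2 : ∀ l : Fin d, ∑ c, ∑ m : Fin d,
        (((b l : E) r) * cconj ((b m : E) s)) * (cconj ((b l : E) c) * ((b m : E) c))
        = ((b l : E) r) * cconj ((b l : E) s) := by
      intro l
      rw [Finset.sum_comm]
      have : ∀ m : Fin d, ∑ c, (((b l : E) r) * cconj ((b m : E) s)) *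
          (cconj ((b l : E) c) * ((b m : E) c))
          = (((b l : E) r) * cconj ((b m : E) s)) * (inner ℂ ((b l : E)) ((b m : E)) : ℂ) := by
        intro m
        rw [hinner, Finset.mul_sum]
      rw [Finset.sum_congr rfl (fun m _ => this m)]
      have horthn := orthonormal_iff_ite.mp b.orthonormal
      have : ∀ m : Fin d, (((b l : E) r) * cconj ((b m : E) s)) *
          (inner ℂ ((b l : E)) ((b m : E)) : ℂ)
          = (((b l : E) r) * cconj ((b m : E) s)) * (if l = m then (1:ℂ) else 0) := by
        intro m
        congr 1
        rw [← Submodule.coe_inner]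
        exact horthn l m
      rw [Finset.sum_congr rfl (fun m _ => this m)]
      simp
    rw [Finset.sum_congr rfl (fun l _ => step2 l)]
  · intro i r
    show ∑ c, (∑ l : Fin d, ((b l : E) r) * cconj ((b l : E) c)) * Z c i = _
    have step : ∀ c, (∑ l : Fin d, ((b l : E) r) * cconj ((b l : E) c)) * Z c i
        = ∑ l : Fin d, ((b l : E) r) * (cconj ((b l : E) c) * Z c i) := by
      intro c; rw [Finset.sum_mul]; apply Finset.sum_congr rfl; intro l _; ring
    rw [Finset.sum_congr rfl (fun c _ => step c), Finset.sum_comm]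
    have step2 : ∀ l : Fin d, ∑ c, ((b l : E) r) * (cconj ((b l : E) c) * Z c i)
        = ((b l : E) r) * (inner ℂ ((b l : E)) (zv i) : ℂ) := by
      intro l; rw [hinner, Finset.mul_sum]
    rw [Finset.sum_congr rfl (fun l _ => step2 l)]
    exact hexp ⟨zv i, Submodule.subset_span (Set.mem_range_self i)⟩ r
  · intro i r
    show ∑ c, (∑ l : Fin d, ((b l : E) r) * cconj ((b l : E) c)) * Y c i = _
    have step : ∀ c, (∑ l : Fin d, ((b l : E) r) * cconj ((b l : E) c)) * Y c i
        = ∑ l : Fin d, ((b l : E) r) * (cconj ((b l : E) c) * Y c i) := by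
      intro c; rw [Finset.sum_mul]; apply Finset.sum_congr rfl; intro l _; ring
    rw [Finset.sum_congr rfl (fun c _ => step c), Finset.sum_comm]
    have step2 : ∀ l : Fin d, ∑ c, ((b l : E) r) * (cconj ((b l : E) c) * Y c i)
        = ((b l : E) r) * (inner ℂ ((b l : E)) (yv i) : ℂ) := by
      intro l; rw [hinner, Finset.mul_sum]
    rw [Finset.sum_congr rfl (fun l _ => step2 l)]
    have : ∀ l : Fin d, ((b l : E) r) * (inner ℂ ((b l : E)) (yv i) : ℂ) = 0 := by
      intro l
      rw [hKorth i _ (hbK l), mul_zero]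
    rw [Finset.sum_congr rfl (fun l _ => this l)]
    exact Finset.sum_const_zero

noncomputable def cjp (q : ℂ[X]) : ℂ[X] := q.map (starRingEnd ℂ)

lemma cjp_add (p q : ℂ[X]) : cjp (p + q) = cjp p + cjp q := Polynomial.map_add _
lemma cjp_mul (p q : ℂ[X]) : cjp (p * q) = cjp p * cjp q := Polynomial.map_mul _
lemma cjp_sub (p q : ℂ[X]) : cjp (p - q) = cjp p - cjp q := Polynomial.map_sub _
lemma cjp_zero : cjp 0 = 0 := Polynomial.map_zero _
lemma cjp_C (z : ℂ) : cjp (Polynomial.C z) = Polynomial.C (cconj z) := Polynomial.map_C _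
lemma cjp_X_sub_C (z : ℂ) : cjp (X - C z) = X - C (cconj z) := by
  unfold cjp; rw [Polynomial.map_sub, Polynomial.map_X, Polynomial.map_C]

lemma cjp_sum {ι : Type*} (s : Finset ι) (f : ι → ℂ[X]) :
    cjp (∑ i ∈ s, f i) = ∑ i ∈ s, cjp (f i) := by
  unfold cjp
  rw [← Polynomial.coe_mapRingHom]
  exact map_sum _ f s

lemma cjp_cjp (q : ℂ[X]) : cjp (cjp q) = q := by
  unfold cjp
  rw [Polynomial.map_map]
  have : (starRingEnd ℂ).comp (starRingEnd ℂ) = RingHom.id ℂ :=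
    RingHom.ext fun z => Complex.conj_conj z
  rw [this, Polynomial.map_id]

lemma eval_cjp' (q : ℂ[X]) (w : ℂ) : (cjp q).eval (cconj w) = cconj (q.eval w) := by
  unfold cjp
  rw [Polynomial.eval_map]
  exact Polynomial.eval₂_at_apply _ w

lemma eval_cjp (q : ℂ[X]) (z : ℂ) : (cjp q).eval z = cconj (q.eval (cconj z)) := by
  have := eval_cjp' q (cconj z)
  rwa [Complex.conj_conj] at this

lemma cjp_real (p : ℝ[X]) : cjp (p.map Complex.ofRealHom) = p.map Complex.ofRealHom := by
  unfold cjp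
  rw [Polynomial.map_map]
  congr 1
  exact RingHom.ext fun x => Complex.conj_ofReal x

/-- Extraction of a conjugate pair of roots from a hermitian factorization. -/
lemma extract_pair {ρ : Type} [Fintype ρ] {n : ℕ} (α : ℂ)
    (S : ρ → Fin n → ℂ[X]) (M₁ : Fin n → Fin n → ℂ[X])
    (hyp : ∀ i j, ∑ r, cjp (S r i) * S r j = (X - C α) * (X - C (cconj α)) * M₁ i j) :
    ∃ T : (ρ ⊕ ρ) → Fin n → ℂ[X], ∀ i j, ∑ r, cjp (T r i) * T r j = M₁ i j := by
  classical
  set Z : ρ → Fin n → ℂ := fun r i => (S r i).eval (cconj α) with hZ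
  set Y : ρ → Fin n → ℂ := fun r i => (S r i).eval α with hY
  have horth : ∀ i j, ∑ r, cconj (Z r i) * Y r j = 0 := by
    intro i j
    have h0 := congrArg (Polynomial.eval α) (hyp i j)
    rw [Polynomial.eval_finset_sum] at h0
    simp only [Polynomial.eval_mul, Polynomial.eval_sub, Polynomial.eval_X, Polynomial.eval_C,
      sub_self, zero_mul] at h0
    calc ∑ r, cconj (Z r i) * Y r j
        = ∑ r, (cjp (S r i)).eval α * (S r j).eval α := by
          apply Finset.sum_congr rfl; intro r _
          rw [hZ, hY, eval_cjp]
      _ = 0 := h0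
  obtain ⟨P, hherm, hidem, hPZ, hPY⟩ := proj_matrix_exists Z Y horth
  set U : ρ → Fin n → ℂ[X] := fun r i => ∑ c, Polynomial.C (P r c) * S c i with hU
  have hUroot : ∀ r i, (U r i).eval α = 0 := by
    intro r i
    rw [hU]
    rw [Polynomial.eval_finset_sum]
    simp only [Polynomial.eval_mul, Polynomial.eval_C]
    have := hPY i r
    rw [hY] at this
    exact this
  have hUZ : ∀ r i, (U r i).eval (cconj α) = Z r i := by
    intro r i
    rw [hU]
    rw [Polynomial.eval_finset_sum]
    simp only [Polynomial.eval_mul, Polynomial.eval_C]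
    have := hPZ i r
    rw [hZ] at this
    exact this
  have hVroot : ∀ r i, (S r i - U r i).eval (cconj α) = 0 := by
    intro r i
    rw [Polynomial.eval_sub, hUZ, hZ]
    exact sub_self _
  choose u hu using fun r i => (Polynomial.dvd_iff_isRoot.mpr (hUroot r i))
  choose v hv using fun r i => (Polynomial.dvd_iff_isRoot.mpr (hVroot r i))
  have hcjU : ∀ r i, cjp (U r i) = ∑ c, Polynomial.C (P c r) * cjp (S c i) := by
    intro r i
    rw [hU, cjp_sum]
    apply Finset.sum_congr rfl; intro c _
    rw [cjp_mul, cjp_C, hherm r c]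
  have key0 : ∀ i j, ∑ r, cjp (U r i) * (S r j - U r j) = 0 := by
    intro i j
    have hA : ∑ r, cjp (U r i) * S r j
        = ∑ c, ∑ d, Polynomial.C (P c d) * (cjp (S c i) * S d j) := by
      calc ∑ r, cjp (U r i) * S r j
          = ∑ r, ∑ c, Polynomial.C (P c r) * (cjp (S c i) * S r j) := by
            apply Finset.sum_congr rfl; intro r _
            rw [hcjU, Finset.sum_mul]
            apply Finset.sum_congr rfl; intro c _
            ring
        _ = ∑ c, ∑ r, Polynomial.C (P c r) * (cjp (S c i) * S r j) := Finset.sum_comm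
    have hB : ∑ r, cjp (U r i) * U r j
        = ∑ c, ∑ d, Polynomial.C (P c d) * (cjp (S c i) * S d j) := by
      calc ∑ r, cjp (U r i) * U r j
          = ∑ r, ∑ c, ∑ d, (Polynomial.C (P c r) * Polynomial.C (P r d)) *
              (cjp (S c i) * S d j) := by
            apply Finset.sum_congr rfl; intro r _
            rw [hcjU, hU, Finset.sum_mul_sum]
            apply Finset.sum_congr rfl; intro c _
            apply Finset.sum_congr rfl; intro d _
            ring
        _ = ∑ c, ∑ r, ∑ d, (Polynomial.C (P c r) * Polynomial.C (P r d)) *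
              (cjp (S c i) * S d j) := Finset.sum_comm
        _ = ∑ c, ∑ d, ∑ r, (Polynomial.C (P c r) * Polynomial.C (P r d)) *
              (cjp (S c i) * S d j) := by
            apply Finset.sum_congr rfl; intro c _
            exact Finset.sum_comm
        _ = ∑ c, ∑ d, Polynomial.C (P c d) * (cjp (S c i) * S d j) := by
            apply Finset.sum_congr rfl; intro c _
            apply Finset.sum_congr rfl; intro d _
            rw [← Finset.sum_mul]
            congr 1
            calc ∑ r, Polynomial.C (P c r) * Polynomial.C (P r d)
                = ∑ r, Polynomial.C (P c r * P r d) := by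
                  apply Finset.sum_congr rfl; intro r _; rw [map_mul]
              _ = Polynomial.C (∑ r, P c r * P r d) := (map_sum Polynomial.C _ _).symm
              _ = Polynomial.C (P c d) := by rw [hidem c d]
    calc ∑ r, cjp (U r i) * (S r j - U r j)
        = (∑ r, cjp (U r i) * S r j) - (∑ r, cjp (U r i) * U r j) := by
          rw [← Finset.sum_sub_distrib]
          apply Finset.sum_congr rfl; intro r _
          ring
      _ = 0 := by rw [hA, hB, sub_self]
  have key0' : ∀ i j, ∑ r, cjp (S r i - U r i) * U r j = 0 := by
    intro i j
    have h := congrArg cjp (key0 j i)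
    rw [cjp_sum, cjp_zero] at h
    calc ∑ r, cjp (S r i - U r i) * U r j
        = ∑ r, cjp (cjp (U r j) * (S r i - U r i)) := by
          apply Finset.sum_congr rfl; intro r _
          rw [cjp_mul, cjp_cjp, mul_comm]
      _ = cjp (∑ r, cjp (U r j) * (S r i - U r i)) := (cjp_sum _ _).symm
      _ = 0 := by rw [key0 j i, cjp_zero]
  have main : ∀ i j, (X - C α) * (X - C (cconj α)) *
      ((∑ r, cjp (u r i) * u r j) + (∑ r, cjp (v r i) * v r j)) =
      (X - C α) * (X - C (cconj α)) * M₁ i j := by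
    intro i j
    rw [← hyp i j]
    symm
    have e1 : ∀ r' i', cjp (S r' i') = cjp (U r' i') + cjp (S r' i' - U r' i') := by
      intro r' i'
      rw [← cjp_add]
      congr 1
      ring
    have hUU : ∑ r, cjp (U r i) * U r j =
        (X - C α) * (X - C (cconj α)) * ∑ r, cjp (u r i) * u r j := by
      rw [Finset.mul_sum]
      apply Finset.sum_congr rfl; intro r _
      rw [hu r i, hu r j, cjp_mul, cjp_X_sub_C]
      ring
    have hVV : ∑ r, cjp (S r i - U r i) * (S r j - U r j) =
        (X - C α) * (X - C (cconj α)) * ∑ r, cjp (v r i) * v r j := by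
      rw [Finset.mul_sum]
      apply Finset.sum_congr rfl; intro r _
      rw [hv r i, hv r j, cjp_mul, cjp_X_sub_C, Complex.conj_conj]
      ring
    calc ∑ r, cjp (S r i) * S r j
        = ∑ r, (cjp (U r i) * U r j + cjp (S r i - U r i) * (S r j - U r j)
            + (cjp (U r i) * (S r j - U r j) + cjp (S r i - U r i) * U r j)) := by
          apply Finset.sum_congr rfl; intro r _
          rw [e1 r i]
          ring
      _ = (∑ r, cjp (U r i) * U r j) + (∑ r, cjp (S r i - U r i) * (S r j - U r j))
            + ((∑ r, cjp (U r i) * (S r j - U r j)) + (∑ r, cjp (S r i - U r i) * U r j)) := by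
          rw [Finset.sum_add_distrib, Finset.sum_add_distrib, Finset.sum_add_distrib]
      _ = (X - C α) * (X - C (cconj α)) *
            ((∑ r, cjp (u r i) * u r j) + (∑ r, cjp (v r i) * v r j)) := by
          rw [key0 i j, key0' i j, hUU, hVV]
          ring
  have hne : (X - C α) * (X - C (cconj α)) ≠ 0 :=
    mul_ne_zero (Polynomial.X_sub_C_ne_zero α) (Polynomial.X_sub_C_ne_zero _)
  refine ⟨Sum.elim u v, ?_⟩
  intro i j
  have hcancel := mul_left_cancel₀ hne (main i j)
  rw [Fintype.sum_sum_type]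
  simp only [Sum.elim_inl, Sum.elim_inr]
  exact hcancel

/-- Constant case of the division lemma. -/
lemma div_out_const {n : ℕ} (g : ℂ[X]) (hg : g ≠ 0) (h0 : g.natDegree = 0)
    (M : Fin n → Fin n → ℂ[X]) (ρ : Type) [instρ : Fintype ρ] (S : ρ → Fin n → ℂ[X])
    (hyp : ∀ i j, ∑ r, cjp (S r i) * S r j = g * cjp g * M i j) :
    ∃ (ρ' : Type) (_ : Fintype ρ') (T : ρ' → Fin n → ℂ[X]),
      ∀ i j, ∑ r, cjp (T r i) * T r j = M i j := by
  obtain ⟨c, hc⟩ := Polynomial.natDegree_eq_zero.mp h0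
  have hcne : c ≠ 0 := by
    intro hz; rw [← hc, hz, map_zero] at hg; exact hg rfl
  set e : ℝ := (Real.sqrt (Complex.normSq c))⁻¹ with he
  have hnsqpos : 0 < Complex.normSq c := Complex.normSq_pos.mpr hcne
  have hekey : ((e : ℂ) * (e : ℂ)) * (c * cconj c) = 1 := by
    rw [Complex.mul_conj]
    have h1 : (e : ℂ) * (e : ℂ) = ((e * e : ℝ) : ℂ) := by push_cast; ring
    rw [h1, ← Complex.ofReal_mul]
    have h2 : e * e * Complex.normSq c = 1 := by
      rw [he]
      rw [← Real.sqrt_mul_self (le_of_lt hnsqpos)]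
      field_simp
      rw [Real.sq_sqrt (Real.sqrt_nonneg _)]
    rw [h2, Complex.ofReal_one]
  have hekey' : (Polynomial.C (e:ℂ) * Polynomial.C (e:ℂ)) *
      (Polynomial.C c * Polynomial.C (cconj c)) = 1 := by
    rw [← map_mul, ← map_mul, ← map_mul, hekey, map_one]
  refine ⟨ρ, instρ, fun r i => Polynomial.C (e : ℂ) * S r i, ?_⟩
  intro i j
  calc ∑ r, cjp (Polynomial.C (e:ℂ) * S r i) * (Polynomial.C (e:ℂ) * S r j)
      = (Polynomial.C (e:ℂ) * Polynomial.C (e:ℂ)) * ∑ r, cjp (S r i) * S r j := by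
        rw [Finset.mul_sum]
        apply Finset.sum_congr rfl; intro r _
        rw [cjp_mul, cjp_C, Complex.conj_ofReal]
        ring
    _ = (Polynomial.C (e:ℂ) * Polynomial.C (e:ℂ)) *
          (Polynomial.C c * Polynomial.C (cconj c) * M i j) := by
        rw [hyp i j, ← hc, cjp_C]
    _ = ((Polynomial.C (e:ℂ) * Polynomial.C (e:ℂ)) *
          (Polynomial.C c * Polynomial.C (cconj c))) * M i j := by ring
    _ = M i j := by rw [hekey', one_mul]

/-- Division lemma: dividing out `g * conj g` from a hermitian factorization. -/
lemma div_out {n : ℕ} : ∀ (N : ℕ) (g : ℂ[X]), g ≠ 0 → g.natDegree ≤ N →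
    ∀ (M : Fin n → Fin n → ℂ[X]) (ρ : Type) [instρ : Fintype ρ] (S : ρ → Fin n → ℂ[X]),
    (∀ i j, ∑ r, cjp (S r i) * S r j = g * cjp g * M i j) →
    ∃ (ρ' : Type) (_ : Fintype ρ') (T : ρ' → Fin n → ℂ[X]),
      ∀ i j, ∑ r, cjp (T r i) * T r j = M i j := by
  intro N
  induction N with
  | zero =>
    intro g hg hdeg M ρ instρ S hyp
    exact div_out_const g hg (Nat.le_zero.mp hdeg) M ρ S hyp
  | succ N ih =>
    intro g hg hdeg M ρ instρ S hyp
    by_cases h0 : g.natDegree = 0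
    · exact div_out_const g hg h0 M ρ S hyp
    · have hdegpos : 0 < g.degree :=
        Polynomial.natDegree_pos_iff_degree_pos.mp (Nat.pos_of_ne_zero h0)
      obtain ⟨α, hα⟩ := Complex.exists_root hdegpos
      obtain ⟨g₁, hg₁⟩ := Polynomial.dvd_iff_isRoot.mpr hα
      have hg₁ne : g₁ ≠ 0 := by
        intro hz; rw [hz, mul_zero] at hg₁; exact hg hg₁
      have hdeg₁ : g₁.natDegree ≤ N := by
        have h1 := Polynomial.natDegree_mul (Polynomial.X_sub_C_ne_zero α) hg₁ne
        rw [← hg₁, Polynomial.natDegree_X_sub_C] at h1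
        omega
      have hyp' : ∀ i j, ∑ r, cjp (S r i) * S r j =
          (X - C α) * (X - C (cconj α)) * (g₁ * cjp g₁ * M i j) := by
        intro i j
        rw [hyp i j, hg₁, cjp_mul, cjp_X_sub_C]
        ring
      obtain ⟨T, hT⟩ := extract_pair α S _ hyp'
      exact ih g₁ hg₁ne hdeg₁ M (ρ ⊕ ρ) T hT

noncomputable def reP (q : ℂ[X]) : ℝ[X] :=
  ∑ n ∈ q.support, Polynomial.C ((q.coeff n).re) * X^n

noncomputable def imP (q : ℂ[X]) : ℝ[X] :=
  ∑ n ∈ q.support, Polynomial.C ((q.coeff n).im) * X^n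

lemma coeff_reP (q : ℂ[X]) (k : ℕ) : (reP q).coeff k = (q.coeff k).re := by
  classical
  unfold reP
  rw [Polynomial.finset_sum_coeff]
  have hterm : ∀ n ∈ q.support, (Polynomial.C ((q.coeff n).re) * X^n).coeff k
      = if n = k then (q.coeff n).re else 0 := by
    intro n _
    rw [Polynomial.coeff_C_mul, Polynomial.coeff_X_pow]
    by_cases h : k = n
    · simp [h]
    · simp [h, Ne.symm h]
  rw [Finset.sum_congr rfl hterm, Finset.sum_ite_eq' q.support k _]
  by_cases hk : k ∈ q.support
  · simp [hk]
  · simp [hk, Polynomial.notMem_support_iff.mp hk]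

lemma coeff_imP (q : ℂ[X]) (k : ℕ) : (imP q).coeff k = (q.coeff k).im := by
  classical
  unfold imP
  rw [Polynomial.finset_sum_coeff]
  have hterm : ∀ n ∈ q.support, (Polynomial.C ((q.coeff n).im) * X^n).coeff k
      = if n = k then (q.coeff n).im else 0 := by
    intro n _
    rw [Polynomial.coeff_C_mul, Polynomial.coeff_X_pow]
    by_cases h : k = n
    · simp [h]
    · simp [h, Ne.symm h]
  rw [Finset.sum_congr rfl hterm, Finset.sum_ite_eq' q.support k _]
  by_cases hk : k ∈ q.support
  · simp [hk]
  · simp [hk, Polynomial.notMem_support_iff.mp hk]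

lemma decompP (q : ℂ[X]) : q = (reP q).map Complex.ofRealHom
    + Polynomial.C Complex.I * (imP q).map Complex.ofRealHom := by
  apply Polynomial.ext; intro k
  rw [Polynomial.coeff_add, Polynomial.coeff_C_mul, Polynomial.coeff_map, Polynomial.coeff_map,
    coeff_reP, coeff_imP, mul_comm]
  exact (Complex.re_add_im (q.coeff k)).symm

lemma real_eq_of_decomp (P1 P2 P3 : ℝ[X])
    (h : P1.map Complex.ofRealHom + Polynomial.C Complex.I * P2.map Complex.ofRealHom
      = P3.map Complex.ofRealHom) : P1 = P3 := by
  apply Polynomial.ext; intro k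
  have hk := congrArg (fun p => Polynomial.coeff p k) h
  simp only [Polynomial.coeff_add, Polynomial.coeff_C_mul, Polynomial.coeff_map] at hk
  have hre := congrArg Complex.re hk
  simpa using hre

/-- Matrix Fejér–Riesz for real symmetric positive semidefinite univariate
polynomial matrices. -/
lemma FR_real : ∀ (n : ℕ) (M : Fin n → Fin n → ℝ[X]),
    (∀ i j, M i j = M j i) →
    (∀ (t : ℝ) (x : Fin n → ℝ), 0 ≤ ∑ i, ∑ j, (M i j).eval t * x i * x j) →
    ∃ (ρ : Type) (_ : Fintype ρ) (Q : ρ → Fin n → ℝ[X]),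
      ∀ i j, M i j = ∑ r, Q r i * Q r j := by
  intro n
  induction n with
  | zero =>
    intro M _ _
    exact ⟨Unit, inferInstance, fun _ _ => 0, fun i _ => i.elim0⟩
  | succ n ih =>
    intro M hsym hpsd
    -- expansion of the quadratic form at vectors (s, x')
    have expand : ∀ (t s : ℝ) (x' : Fin n → ℝ),
        (∑ i, ∑ j, (M i j).eval t * (Fin.cases s x' i) * (Fin.cases s x' j)) =
        (M 0 0).eval t * (s*s) + (2*(∑ j, (M 0 j.succ).eval t * x' j)) * s
          + ∑ i, ∑ j, (M i.succ j.succ).eval t * x' i * x' j := by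
      intro t s x'
      rw [Fin.sum_univ_succ]
      rw [Fin.sum_univ_succ]
      simp only [Fin.cases_zero, Fin.cases_succ]
      rw [Finset.sum_congr rfl (fun i (_ : i ∈ Finset.univ) => Fin.sum_univ_succ
        (fun j => (M i.succ j).eval t * x' i * (Fin.cases s x' j)))]
      simp only [Fin.cases_zero, Fin.cases_succ]
      have hs1 : ∑ j, (M 0 j.succ).eval t * s * x' j
          = (∑ j, (M 0 j.succ).eval t * x' j) * s := by
        rw [Finset.sum_mul]
        apply Finset.sum_congr rfl; intro j _; ring
      have hs2 : ∑ i, ((M i.succ 0).eval t * x' i * s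
            + ∑ j, (M i.succ j.succ).eval t * x' i * x' j)
          = (∑ i, (M 0 i.succ).eval t * x' i) * s
            + ∑ i, ∑ j, (M i.succ j.succ).eval t * x' i * x' j := by
        rw [Finset.sum_add_distrib]
        congr 1
        rw [Finset.sum_mul]
        apply Finset.sum_congr rfl; intro i _
        rw [hsym i.succ 0]
      rw [hs1, hs2]
      ring
    -- diagonal entry nonneg
    have hM00 : ∀ t : ℝ, 0 ≤ (M 0 0).eval t := by
      intro t
      have h := hpsd t (Fin.cases 1 (fun _ => 0))
      rw [expand t 1 (fun _ => 0)] at h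
      simpa using h
    by_cases hM000 : M 0 0 = 0
    · -- degenerate corner: first row vanishes
      have hzero : ∀ j : Fin n, M 0 j.succ = 0 := by
        intro j
        apply Polynomial.funext
        intro t
        have hlin : ∀ s : ℝ, 0 ≤ (2*(M 0 j.succ).eval t) * s
            + ∑ i', ∑ j', (M i'.succ j'.succ).eval t
              * (fun j' => if j' = j then (1:ℝ) else 0) i'
              * (fun j' => if j' = j then (1:ℝ) else 0) j' := by
          intro s
          have h := hpsd t (Fin.cases s (fun j' => if j' = j then 1 else 0))
          rw [expand] at h
          rw [hM000] at h
          simp only [Polynomial.eval_zero, zero_mul, zero_add] at h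
          have hsum : (∑ j', (M 0 j'.succ).eval t * (if j' = j then (1:ℝ) else 0))
              = (M 0 j.succ).eval t := by
            simp [Finset.sum_ite_eq']
          rw [hsum] at h
          exact h
        have := lin_eq_zero hlin
        have h2 : (M 0 j.succ).eval t = 0 := by linarith
        simpa using h2
      have hpsd' : ∀ (t : ℝ) (x' : Fin n → ℝ),
          0 ≤ ∑ i, ∑ j, ((M i.succ j.succ).eval t) * x' i * x' j := by
        intro t x'
        have h := hpsd t (Fin.cases 0 x')
        rw [expand] at h
        simpa using h
      obtain ⟨ρ, instρ, Q', hQ'⟩ := ih (fun i j => M i.succ j.succ)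
        (fun i j => hsym i.succ j.succ) hpsd'
      refine ⟨ρ, instρ, fun r i => Fin.cases 0 (Q' r) i, ?_⟩
      intro i j
      refine Fin.cases ?_ (fun i' => ?_) i
      · refine Fin.cases ?_ (fun j' => ?_) j
        · simp [hM000]
        · simp [hzero j']
      · refine Fin.cases ?_ (fun j' => ?_) j
        · rw [hsym i'.succ 0]
          simp [hzero i']
        · simpa using hQ' i' j'
    · -- nondegenerate corner
      set P := M 0 0 with hP
      obtain ⟨e, f, hef⟩ := nonneg_poly_sum_two_sq P hM00
      set m : Fin n → ℝ[X] := fun j => M 0 j.succ with hm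
      set NN : Fin n → Fin n → ℝ[X] :=
        fun i j => P * M i.succ j.succ - m i * m j with hNN
      have hsymN : ∀ i j, NN i j = NN j i := by
        intro i j
        rw [hNN]
        simp only
        rw [hsym i.succ j.succ]
        ring
      have hpsdN : ∀ (t : ℝ) (x' : Fin n → ℝ),
          0 ≤ ∑ i, ∑ j, ((NN i j).eval t) * x' i * x' j := by
        intro t x'
        set L := ∑ j, (m j).eval t * x' j with hL
        set Qd := ∑ i, ∑ j, (M i.succ j.succ).eval t * x' i * x' j with hQd
        have hquad : ∀ s : ℝ, 0 ≤ P.eval t * (s*s) + (2*L) * s + Qd := by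
          intro s
          have h := hpsd t (Fin.cases s x')
          rw [expand] at h
          exact h
        have hdisc := discrim_le_zero hquad
        rw [discrim] at hdisc
        have hkey : 0 ≤ P.eval t * Qd - L * L := by nlinarith
        have hval : ∑ i, ∑ j, ((NN i j).eval t) * x' i * x' j
            = P.eval t * Qd - L * L := by
          rw [hNN, hQd, hL]
          simp only [Polynomial.eval_sub, Polynomial.eval_mul]
          rw [Finset.sum_mul_sum, Finset.mul_sum, ← Finset.sum_sub_distrib]
          apply Finset.sum_congr rfl; intro i _
          rw [Finset.mul_sum, ← Finset.sum_sub_distrib]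
          apply Finset.sum_congr rfl; intro j _
          ring
        rw [hval]
        exact hkey
      obtain ⟨ρ, instρ, R, hR⟩ := ih NN hsymN hpsdN
      -- pass to ℂ
      set g : ℂ[X] := e.map Complex.ofRealHom
          + Polynomial.C Complex.I * f.map Complex.ofRealHom with hg
      have hCI : Polynomial.C Complex.I * Polynomial.C Complex.I = (-1 : ℂ[X]) := by
        rw [← map_mul, Complex.I_mul_I, map_neg, map_one]
      have hcjg : cjp g = e.map Complex.ofRealHom
          - Polynomial.C Complex.I * f.map Complex.ofRealHom := by
        rw [hg, cjp_add, cjp_mul, cjp_C, Complex.conj_I, cjp_real, cjp_real, map_neg]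
        ring
      have hgg : g * cjp g = P.map Complex.ofRealHom := by
        rw [hg, hcjg]
        have expand2 : (e.map Complex.ofRealHom + Polynomial.C Complex.I * f.map Complex.ofRealHom)
            * (e.map Complex.ofRealHom - Polynomial.C Complex.I * f.map Complex.ofRealHom)
            = e.map Complex.ofRealHom * e.map Complex.ofRealHom
              - (Polynomial.C Complex.I * Polynomial.C Complex.I)
                * (f.map Complex.ofRealHom * f.map Complex.ofRealHom) := by ring
        rw [expand2, hCI, hef]
        rw [Polynomial.map_add, Polynomial.map_pow, Polynomial.map_pow]
        ring
      have hPmapne : P.map Complex.ofRealHom ≠ 0 := by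
        rw [Ne, Polynomial.map_eq_zero_iff Complex.ofReal_injective]
        exact hM000
      have hgne : g ≠ 0 := by
        intro hz
        rw [hz, zero_mul] at hgg
        exact hPmapne hgg.symm
      -- the complex factorization hypothesis
      set S : (Unit ⊕ ρ) → Fin (n+1) → ℂ[X] :=
        Sum.elim (fun _ i => Fin.cases (P.map Complex.ofRealHom)
            (fun j => (m j).map Complex.ofRealHom) i)
          (fun r i => Fin.cases 0 (fun j => (R r j).map Complex.ofRealHom) i) with hS
      have hypS : ∀ i j, ∑ rr, cjp (S rr i) * S rr j
          = g * cjp g * ((M i j).map Complex.ofRealHom) := by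
        intro i j
        rw [hgg]
        rw [Fintype.sum_sum_type]
        simp only [hS, Sum.elim_inl, Sum.elim_inr]
        rw [Finset.sum_const, Finset.card_univ, Fintype.card_unit, one_smul]
        refine Fin.cases ?_ (fun i' => ?_) i
        · refine Fin.cases ?_ (fun j' => ?_) j
          · simp only [Fin.cases_zero, cjp_zero, zero_mul, mul_zero,
              Finset.sum_const_zero, add_zero]
            rw [cjp_real, ← hP]
          · simp only [Fin.cases_zero, Fin.cases_succ, cjp_zero, zero_mul, mul_zero,
              Finset.sum_const_zero, add_zero]
            rw [cjp_real]
        · refine Fin.cases ?_ (fun j' => ?_) j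
          · simp only [Fin.cases_zero, Fin.cases_succ, cjp_zero, zero_mul, mul_zero,
              Finset.sum_const_zero, add_zero]
            rw [cjp_real, hsym i'.succ 0, show M 0 i'.succ = m i' from rfl]
            ring
          · simp only [Fin.cases_succ, cjp_zero, zero_mul, mul_zero,
              Finset.sum_const_zero, add_zero]
            rw [cjp_real]
            have hrj : ∀ r : ρ, cjp ((R r i').map Complex.ofRealHom)
                * ((R r j').map Complex.ofRealHom)
                = ((R r i' * R r j').map Complex.ofRealHom) := by
              intro r
              rw [cjp_real, ← Polynomial.map_mul]
            rw [Finset.sum_congr rfl (fun r _ => hrj r)]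
            have hsumR : ∑ r : ρ, ((R r i' * R r j').map Complex.ofRealHom)
                = ((∑ r : ρ, R r i' * R r j').map Complex.ofRealHom) := by
              rw [← Polynomial.coe_mapRingHom, ← map_sum]
            rw [hsumR, ← hR i' j']
            rw [← Polynomial.map_mul, ← Polynomial.map_add, ← Polynomial.map_mul]
            congr 1
            have hNNrfl : NN i' j' = P * M i'.succ j'.succ - m i' * m j' := rfl
            rw [hNNrfl]
            ring
      obtain ⟨ρ', instρ', T, hT⟩ := div_out g.natDegree g hgne le_rfl
        (fun i j => (M i j).map Complex.ofRealHom) (Unit ⊕ ρ) S hypS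
      -- realification
      refine ⟨ρ' ⊕ ρ', inferInstance,
        Sum.elim (fun r i => reP (T r i)) (fun r i => imP (T r i)), ?_⟩
      intro i j
      have hTij := hT i j
      have hterm : ∀ r : ρ', cjp (T r i) * T r j
          = ((reP (T r i) * reP (T r j) + imP (T r i) * imP (T r j)).map Complex.ofRealHom)
            + Polynomial.C Complex.I *
              ((reP (T r i) * imP (T r j) - imP (T r i) * reP (T r j)).map Complex.ofRealHom) := by
        intro r
        conv_lhs => rw [decompP (T r i), decompP (T r j)]
        rw [cjp_add, cjp_mul, cjp_C, Complex.conj_I, cjp_real, cjp_real, map_neg]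
        rw [Polynomial.map_add, Polynomial.map_mul, Polynomial.map_mul,
          Polynomial.map_sub, Polynomial.map_mul, Polynomial.map_mul]
        have : ∀ (A B A' B' : ℂ[X]), (A + -(Polynomial.C Complex.I) * B) * (A' + Polynomial.C Complex.I * B')
            = (A * A' - (Polynomial.C Complex.I * Polynomial.C Complex.I) * (B * B'))
              + Polynomial.C Complex.I * (A * B' - B * A') := by
          intro A B A' B'
          ring
        rw [this, hCI]
        ring
      rw [Finset.sum_congr rfl (fun r _ => hterm r)] at hTij
      rw [Finset.sum_add_distrib] at hTij
      have hre : ∑ r : ρ', ((reP (T r i) * reP (T r j) + imP (T r i) * imP (T r j)).map Complex.ofRealHom)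
          = ((∑ r : ρ', (reP (T r i) * reP (T r j) + imP (T r i) * imP (T r j))).map Complex.ofRealHom) := by
        rw [← Polynomial.coe_mapRingHom, ← map_sum]
      have him : ∑ r : ρ', Polynomial.C Complex.I *
            ((reP (T r i) * imP (T r j) - imP (T r i) * reP (T r j)).map Complex.ofRealHom)
          = Polynomial.C Complex.I *
            ((∑ r : ρ', (reP (T r i) * imP (T r j) - imP (T r i) * reP (T r j))).map Complex.ofRealHom) := by
        rw [← Finset.mul_sum]
        congr 1
        rw [← Polynomial.coe_mapRingHom, ← map_sum]
      rw [hre, him] at hTij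
      rw [← real_eq_of_decomp _ _ _ hTij]
      rw [Fintype.sum_sum_type]
      simp only [Sum.elim_inl, Sum.elim_inr]
      rw [← Finset.sum_add_distrib]

lemma myCoeffCXpow (x : ℝ) (k nn : ℕ) :
    (Polynomial.C x * X^k : ℝ[X]).coeff nn = if nn = k then x else 0 := by
  rw [Polynomial.coeff_C_mul, Polynomial.coeff_X_pow]
  by_cases h : nn = k <;> simp [h]

lemma col_deg_le {ρ : Type} [Fintype ρ] (Q : ρ → ℝ[X]) (s : ℝ[X])
    (h : ∑ r, Q r * Q r = s) (hs : s.natDegree ≤ 2) : ∀ r, (Q r).natDegree ≤ 1 := by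
  classical
  by_contra hcon
  push_neg at hcon
  obtain ⟨r0, hr0⟩ := hcon
  have hne : (Finset.univ : Finset ρ).Nonempty := ⟨r0, Finset.mem_univ r0⟩
  obtain ⟨r1, _, hr1⟩ := Finset.exists_mem_eq_sup Finset.univ hne (fun r => (Q r).natDegree)
  set d := Finset.univ.sup (fun r => (Q r).natDegree) with hd
  have hle : ∀ r, (Q r).natDegree ≤ d :=
    fun r => Finset.le_sup (f := fun r => (Q r).natDegree) (Finset.mem_univ r)
  have hdge : 2 ≤ d := le_trans hr0 (hle r0)
  have hcoeff : ∀ r : ρ, (Q r * Q r).coeff (d + d) = (Q r).coeff d * (Q r).coeff d := by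
    intro r
    rw [Polynomial.coeff_mul]
    apply Finset.sum_eq_single_of_mem (d, d)
    · rw [Finset.HasAntidiagonal.mem_antidiagonal]
    · intro b hb hbne
      rw [Finset.HasAntidiagonal.mem_antidiagonal] at hb
      have hne2 : ¬(b.1 = d ∧ b.2 = d) := by
        intro ⟨h1, h2⟩
        exact hbne (Prod.ext h1 h2)
      by_cases hb1 : d < b.1
      · rw [Polynomial.coeff_eq_zero_of_natDegree_lt (lt_of_le_of_lt (hle r) hb1), zero_mul]
      · have hb2 : d < b.2 := by omega
        rw [Polynomial.coeff_eq_zero_of_natDegree_lt (lt_of_le_of_lt (hle r) hb2), mul_zero]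
  have hsum : s.coeff (d + d) = ∑ r, (Q r).coeff d * (Q r).coeff d := by
    rw [← h, Polynomial.finset_sum_coeff]
    exact Finset.sum_congr rfl (fun r _ => hcoeff r)
  have hQne : Q r1 ≠ 0 := by
    intro hz
    rw [hz, Polynomial.natDegree_zero] at hr1
    rw [hr1] at hdge
    omega
  have hQr1ne : (Q r1).coeff d ≠ 0 := by
    rw [hr1]
    exact Polynomial.leadingCoeff_ne_zero.mpr hQne
  have hpos : 0 < s.coeff (d + d) := by
    rw [hsum]
    exact Finset.sum_pos' (fun r _ => mul_self_nonneg _)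
      ⟨r1, Finset.mem_univ r1, mul_self_pos.mpr hQr1ne⟩
  have hzero : s.coeff (d + d) = 0 :=
    Polynomial.coeff_eq_zero_of_natDegree_lt (by omega)
  rw [hzero] at hpos
  exact lt_irrefl 0 hpos

lemma coeff_mul_deg1 (p q : ℝ[X]) (hp : p.natDegree ≤ 1) (hq : q.natDegree ≤ 1) :
    (p*q).coeff 0 = p.coeff 0 * q.coeff 0 ∧
    (p*q).coeff 1 = p.coeff 0 * q.coeff 1 + p.coeff 1 * q.coeff 0 ∧
    (p*q).coeff 2 = p.coeff 1 * q.coeff 1 := by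
  have hpf := Polynomial.eq_X_add_C_of_natDegree_le_one hp
  have hqf := Polynomial.eq_X_add_C_of_natDegree_le_one hq
  have hexp : p * q = Polynomial.C (p.coeff 1 * q.coeff 1) * X^2
      + Polynomial.C (p.coeff 0 * q.coeff 1 + p.coeff 1 * q.coeff 0) * X^1
      + Polynomial.C (p.coeff 0 * q.coeff 0) * X^0 := by
    conv_lhs => rw [hpf, hqf]
    rw [map_mul, map_add, map_mul, map_mul, map_mul]
    ring
  refine ⟨?_, ?_, ?_⟩ <;>
    rw [hexp, Polynomial.coeff_add, Polynomial.coeff_add,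
      myCoeffCXpow, myCoeffCXpow, myCoeffCXpow] <;>
    norm_num

lemma split3 {n : ℕ} (f g h' : Fin n → Fin n → ℝ) :
    ∑ i, ∑ j, (f i j + g i j + h' i j)
      = (∑ i, ∑ j, f i j) + (∑ i, ∑ j, g i j) + (∑ i, ∑ j, h' i j) := by
  have hrow : ∀ i : Fin n, ∑ j, (f i j + g i j + h' i j)
      = (∑ j, f i j) + (∑ j, g i j) + (∑ j, h' i j) := by
    intro i
    rw [Finset.sum_add_distrib, Finset.sum_add_distrib]
  rw [Finset.sum_congr rfl (fun i _ => hrow i), Finset.sum_add_distrib, Finset.sum_add_distrib]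

lemma factor_out {n : ℕ} (f : Fin n → Fin n → ℝ) (c : ℝ) :
    ∑ i, ∑ j, f i j * c = (∑ i, ∑ j, f i j) * c := by
  rw [Finset.sum_mul]
  apply Finset.sum_congr rfl; intro i _
  rw [Finset.sum_mul]

lemma symm_sum {n : ℕ} (A : Fin n → Fin n → ℝ) (x : Fin n → ℝ) :
    ∑ i, ∑ j, (A i j + A j i)/2 * x i * x j = ∑ i, ∑ j, A i j * x i * x j := by
  have h1 : ∑ i, ∑ j, A j i * x i * x j = ∑ i, ∑ j, A i j * x i * x j := by
    rw [Finset.sum_comm]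
    apply Finset.sum_congr rfl; intro i _
    apply Finset.sum_congr rfl; intro j _
    ring
  have hsplit : ∀ i j, (A i j + A j i)/2 * x i * x j
      = (A i j * x i * x j)/2 + (A j i * x i * x j)/2 := by
    intro i j; ring
  have hdiv : ∀ (f : Fin n → Fin n → ℝ), ∑ i, ∑ j, (f i j)/2 = (∑ i, ∑ j, f i j)/2 := by
    intro f
    calc ∑ i, ∑ j, f i j / 2 = ∑ i, (∑ j, f i j)/2 := by
          apply Finset.sum_congr rfl; intro i _
          rw [Finset.sum_div]
      _ = (∑ i, ∑ j, f i j)/2 := by rw [Finset.sum_div]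
  rw [Finset.sum_congr rfl (fun i _ => Finset.sum_congr rfl (fun j _ => hsplit i j))]
  rw [Finset.sum_congr rfl (fun i (_ : i ∈ Finset.univ) => Finset.sum_add_distrib),
    Finset.sum_add_distrib, hdiv, hdiv, h1]
  ring

lemma gram_expand {ρ τ : Type} [Fintype ρ] [Fintype τ] (W : ρ → τ → ℝ) (v : τ → ℝ) :
    ∑ r, (∑ p, W r p * v p)^2 = ∑ p, ∑ p', (∑ r, W r p * W r p') * v p * v p' := by
  have hsq : ∀ r : ρ, (∑ p, W r p * v p)^2
      = ∑ p, ∑ p', (W r p * W r p') * v p * v p' := by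
    intro r
    rw [pow_two, Finset.sum_mul_sum]
    apply Finset.sum_congr rfl; intro pp _
    apply Finset.sum_congr rfl; intro pp' _
    ring
  rw [Finset.sum_congr rfl (fun r _ => hsq r)]
  rw [Finset.sum_comm]
  apply Finset.sum_congr rfl; intro pp _
  rw [Finset.sum_comm]
  apply Finset.sum_congr rfl; intro pp' _
  rw [Finset.sum_mul, Finset.sum_mul]

lemma triple_swap {ρ : Type} [Fintype ρ] {n : ℕ} (u v : ρ → Fin n → ℝ) (x : Fin n → ℝ) :
    ∑ r, (∑ i, u r i * x i) * (∑ j, v r j * x j)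
      = ∑ i, ∑ j, (∑ r, u r i * v r j) * x i * x j := by
  have h1 : ∀ r : ρ, (∑ i, u r i * x i) * (∑ j, v r j * x j)
      = ∑ i, ∑ j, (u r i * v r j) * x i * x j := by
    intro r
    rw [Finset.sum_mul_sum]
    apply Finset.sum_congr rfl; intro i _
    apply Finset.sum_congr rfl; intro j _
    ring
  rw [Finset.sum_congr rfl (fun r _ => h1 r), Finset.sum_comm]
  apply Finset.sum_congr rfl; intro i _
  rw [Finset.sum_comm]
  apply Finset.sum_congr rfl; intro j _
  rw [Finset.sum_mul, Finset.sum_mul]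

set_option maxHeartbeats 1000000 in
/-- For a psd (m−1)×1×1 degenerated tripartite quartic form (m ≥ 3)
`h(x,y,z) = h₂(x)z² + h₃(x)yz + h₄(x)y² + h₅(x)yz² + h₆(x)y²z + h₇y²z²`,
the function `(x,(y,z)) ↦ h₂(x)z² + h₃(x)yz + h₄(x)y²` is a psd (m−1)×2
biquadratic form in the blocks x ∈ ℝ^{m−1} and w = (y,z) ∈ ℝ², and it is a sum of
at most 2(m−1) squares of bilinear forms. -/
theorem deg111_psd_biquadratic_part (m : ℕ) (hm : 3 ≤ m)
    (A B C : Fin (m - 1) → Fin (m - 1) → ℝ) (p q : Fin (m - 1) → ℝ) (h7 : ℝ)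
    (h : (Fin (m - 1) → ℝ) → ℝ → ℝ → ℝ)
    (hh : ∀ x y z, h x y z =
      (∑ i, ∑ j, A i j * x i * x j) * z ^ 2
        + (∑ i, ∑ j, B i j * x i * x j) * (y * z)
        + (∑ i, ∑ j, C i j * x i * x j) * y ^ 2
        + (∑ i, p i * x i) * (y * z ^ 2)
        + (∑ i, q i * x i) * (y ^ 2 * z)
        + h7 * (y ^ 2 * z ^ 2))
    (hpsd : ∀ x y z, 0 ≤ h x y z)
    (F : (Fin (m - 1) → ℝ) → (Fin 2 → ℝ) → ℝ)
    (hF : ∀ (x : Fin (m - 1) → ℝ) (w : Fin 2 → ℝ), F x w =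
      (∑ i, ∑ j, A i j * x i * x j) * (w 1) ^ 2
        + (∑ i, ∑ j, B i j * x i * x j) * (w 0 * w 1)
        + (∑ i, ∑ j, C i j * x i * x j) * (w 0) ^ 2) :
    (∃ a : Fin (m - 1) → Fin (m - 1) → Fin 2 → Fin 2 → ℝ,
      ∀ x w, F x w = ∑ i, ∑ j, ∑ k, ∑ l, a i j k l * x i * x j * w k * w l) ∧
    (∀ x w, 0 ≤ F x w) ∧
    (∃ c : Fin (2 * (m - 1)) → Fin (m - 1) → Fin 2 → ℝ,
      ∀ x w, F x w = ∑ t, (∑ i, ∑ k, c t i k * x i * w k) ^ 2) := by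
  classical
  -- second conjunct
  have hF2 : ∀ x w, 0 ≤ F x w := by
    intro x w
    have key : ∀ t : ℝ, 0 ≤ F x w * t^2
        + ((∑ i, p i * x i) * (w 0 * (w 1)^2) + (∑ i, q i * x i) * ((w 0)^2 * w 1)) * t
        + h7 * ((w 0)^2 * (w 1)^2) := by
      intro t
      have hps := hpsd (fun i => t * x i) (w 0) (w 1)
      rw [hh] at hps
      have sA : ∑ i, ∑ j, A i j * (t * x i) * (t * x j)
          = (∑ i, ∑ j, A i j * x i * x j) * t^2 := by
        rw [Finset.sum_mul]
        apply Finset.sum_congr rfl; intro i _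
        rw [Finset.sum_mul]
        apply Finset.sum_congr rfl; intro j _
        ring
      have sB : ∑ i, ∑ j, B i j * (t * x i) * (t * x j)
          = (∑ i, ∑ j, B i j * x i * x j) * t^2 := by
        rw [Finset.sum_mul]
        apply Finset.sum_congr rfl; intro i _
        rw [Finset.sum_mul]
        apply Finset.sum_congr rfl; intro j _
        ring
      have sC : ∑ i, ∑ j, C i j * (t * x i) * (t * x j)
          = (∑ i, ∑ j, C i j * x i * x j) * t^2 := by
        rw [Finset.sum_mul]
        apply Finset.sum_congr rfl; intro i _
        rw [Finset.sum_mul]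
        apply Finset.sum_congr rfl; intro j _
        ring
      have sp : ∑ i, p i * (t * x i) = (∑ i, p i * x i) * t := by
        rw [Finset.sum_mul]
        apply Finset.sum_congr rfl; intro i _
        ring
      have sq2 : ∑ i, q i * (t * x i) = (∑ i, q i * x i) * t := by
        rw [Finset.sum_mul]
        apply Finset.sum_congr rfl; intro i _
        ring
      rw [sA, sB, sC, sp, sq2] at hps
      rw [hF]
      nlinarith [hps]
    exact quad_leading_nonneg key
  refine ⟨?_, hF2, ?_⟩
  · -- first conjunct
    refine ⟨fun i j => ![![C i j, B i j], ![(0:ℝ), A i j]], ?_⟩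
    intro x w
    rw [hF x w]
    have hterm : ∀ i j, (∑ k, ∑ l,
        (![![C i j, B i j], ![(0:ℝ), A i j]] : Fin 2 → Fin 2 → ℝ) k l * x i * x j * w k * w l)
        = C i j * x i * x j * (w 0 * w 0) + B i j * x i * x j * (w 0 * w 1)
          + A i j * x i * x j * (w 1 * w 1) := by
      intro i j
      rw [Fin.sum_univ_two, Fin.sum_univ_two, Fin.sum_univ_two]
      simp only [Matrix.cons_val_zero, Matrix.cons_val_one, Matrix.head_cons]
      ring
    calc (∑ i, ∑ j, A i j * x i * x j) * (w 1) ^ 2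
        + (∑ i, ∑ j, B i j * x i * x j) * (w 0 * w 1)
        + (∑ i, ∑ j, C i j * x i * x j) * (w 0) ^ 2
        = ∑ i, ∑ j, (C i j * x i * x j * (w 0 * w 0) + B i j * x i * x j * (w 0 * w 1)
            + A i j * x i * x j * (w 1 * w 1)) := by
          rw [split3, factor_out, factor_out, factor_out]
          ring
      _ = ∑ i, ∑ j, ∑ k, ∑ l,
            (![![C i j, B i j], ![(0:ℝ), A i j]] : Fin 2 → Fin 2 → ℝ) k l
              * x i * x j * w k * w l := by
          apply Finset.sum_congr rfl; intro i _
          apply Finset.sum_congr rfl; intro j _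
          exact (hterm i j).symm
  · -- third conjunct
    set a' : Fin (m-1) → Fin (m-1) → ℝ := fun i j => (A i j + A j i)/2 with ha'
    set b' : Fin (m-1) → Fin (m-1) → ℝ := fun i j => (B i j + B j i)/2 with hb'
    set c' : Fin (m-1) → Fin (m-1) → ℝ := fun i j => (C i j + C j i)/2 with hc'
    set MP : Fin (m-1) → Fin (m-1) → ℝ[X] := fun i j =>
      Polynomial.C (c' i j) * X^0 + Polynomial.C (b' i j) * X^1
        + Polynomial.C (a' i j) * X^2 with hMP
    have hMPsym : ∀ i j, MP i j = MP j i := by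
      intro i j
      have e1 : a' i j = a' j i := by simp only [ha']; ring
      have e2 : b' i j = b' j i := by simp only [hb']; ring
      have e3 : c' i j = c' j i := by simp only [hc']; ring
      simp only [hMP]
      rw [e1, e2, e3]
    have hMPeval : ∀ i j t, (MP i j).eval t = c' i j + b' i j * t + a' i j * t^2 := by
      intro i j t
      simp only [hMP]
      simp only [Polynomial.eval_add, Polynomial.eval_mul, Polynomial.eval_pow,
        Polynomial.eval_C, Polynomial.eval_X]
      ring
    have hMPpsd : ∀ (t : ℝ) (x : Fin (m-1) → ℝ),
        0 ≤ ∑ i, ∑ j, (MP i j).eval t * x i * x j := by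
      intro t x
      have hterm : ∀ i j, (MP i j).eval t * x i * x j
          = c' i j * x i * x j * (1*1) + b' i j * x i * x j * (1*t)
            + a' i j * x i * x j * (t*t) := by
        intro i j
        rw [hMPeval]
        ring
      have hval : ∑ i, ∑ j, (MP i j).eval t * x i * x j = F x ![1, t] := by
        rw [Finset.sum_congr rfl (fun i _ => Finset.sum_congr rfl (fun j _ => hterm i j)),
          split3, factor_out, factor_out, factor_out]
        rw [hF]
        simp only [Matrix.cons_val_zero, Matrix.cons_val_one, Matrix.head_cons]
        simp only [hc', hb', ha']
        rw [symm_sum A x, symm_sum B x, symm_sum C x]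
        ring
      rw [hval]
      exact hF2 x ![1, t]
    obtain ⟨ρ, instρ, Q, hQ⟩ := FR_real (m-1) MP hMPsym hMPpsd
    letI := instρ
    have hMPdeg : ∀ i, (MP i i).natDegree ≤ 2 := by
      intro i
      have hd1 : (Polynomial.C (c' i i) * X^0 : ℝ[X]).natDegree ≤ 2 :=
        le_trans (Polynomial.natDegree_C_mul_le _ _) (by simp)
      have hd2 : (Polynomial.C (b' i i) * X^1 : ℝ[X]).natDegree ≤ 2 :=
        le_trans (Polynomial.natDegree_C_mul_le _ _) (by simp)
      have hd3 : (Polynomial.C (a' i i) * X^2 : ℝ[X]).natDegree ≤ 2 :=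
        le_trans (Polynomial.natDegree_C_mul_le _ _) (by simp)
      simp only [hMP]
      exact le_trans (Polynomial.natDegree_add_le _ _)
        (max_le (le_trans (Polynomial.natDegree_add_le _ _) (max_le hd1 hd2)) hd3)
    have hdeg1 : ∀ r i, (Q r i).natDegree ≤ 1 := by
      intro r i
      exact col_deg_le (fun r => Q r i) (MP i i) (hQ i i).symm (hMPdeg i) r
    set q0 : ρ → Fin (m-1) → ℝ := fun r i => (Q r i).coeff 0 with hq0
    set q1 : ρ → Fin (m-1) → ℝ := fun r i => (Q r i).coeff 1 with hq1
    have hcoeffs : ∀ i j,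
        c' i j = ∑ r, q0 r i * q0 r j ∧
        b' i j = ∑ r, (q0 r i * q1 r j + q1 r i * q0 r j) ∧
        a' i j = ∑ r, q1 r i * q1 r j := by
      intro i j
      have hM0 : (MP i j).coeff 0 = c' i j := by
        simp only [hMP]
        rw [Polynomial.coeff_add, Polynomial.coeff_add,
          myCoeffCXpow, myCoeffCXpow, myCoeffCXpow]
        norm_num
      have hM1 : (MP i j).coeff 1 = b' i j := by
        simp only [hMP]
        rw [Polynomial.coeff_add, Polynomial.coeff_add,
          myCoeffCXpow, myCoeffCXpow, myCoeffCXpow]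
        norm_num
      have hM2 : (MP i j).coeff 2 = a' i j := by
        simp only [hMP]
        rw [Polynomial.coeff_add, Polynomial.coeff_add,
          myCoeffCXpow, myCoeffCXpow, myCoeffCXpow]
        norm_num
      have h0 := congrArg (fun pp => Polynomial.coeff pp 0) (hQ i j)
      have h1 := congrArg (fun pp => Polynomial.coeff pp 1) (hQ i j)
      have h2 := congrArg (fun pp => Polynomial.coeff pp 2) (hQ i j)
      rw [Polynomial.finset_sum_coeff, hM0] at h0
      rw [Polynomial.finset_sum_coeff, hM1] at h1
      rw [Polynomial.finset_sum_coeff, hM2] at h2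
      refine ⟨?_, ?_, ?_⟩
      · rw [h0]
        exact Finset.sum_congr rfl
          (fun r _ => (coeff_mul_deg1 (Q r i) (Q r j) (hdeg1 r i) (hdeg1 r j)).1)
      · rw [h1]
        exact Finset.sum_congr rfl
          (fun r _ => (coeff_mul_deg1 (Q r i) (Q r j) (hdeg1 r i) (hdeg1 r j)).2.1)
      · rw [h2]
        exact Finset.sum_congr rfl
          (fun r _ => (coeff_mul_deg1 (Q r i) (Q r j) (hdeg1 r i) (hdeg1 r j)).2.2)
    -- Gram compression
    set Dm : Matrix ρ (Fin (m-1) × Fin 2) ℝ :=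
      Matrix.of (fun r pp => (![q0 r pp.1, q1 r pp.1] : Fin 2 → ℝ) pp.2) with hDm
    have hGpsd : (Dm.conjTranspose * Dm).PosSemidef := Matrix.posSemidef_conjTranspose_mul_self Dm
    open scoped MatrixOrder in
      obtain ⟨Bm, hBm⟩ : ∃ Bm : Matrix (Fin (m-1) × Fin 2) (Fin (m-1) × Fin 2) ℝ,
        Dm.conjTranspose * Dm = Bm.conjTranspose * Bm := CStarAlgebra.nonneg_iff_eq_star_mul_self.mp (Matrix.nonneg_iff_posSemidef.mpr hGpsd)
    have h2n : 2 * (m-1) = (m-1) * 2 := by ring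
    set eqv : Fin (2*(m-1)) ≃ (Fin (m-1) × Fin 2) :=
      (finCongr h2n).trans finProdFinEquiv.symm with heqv
    refine ⟨fun tt i k => Bm (eqv tt) (i, k), ?_⟩
    intro x w
    set v : Fin (m-1) × Fin 2 → ℝ := fun pp => x pp.1 * w pp.2 with hv
    have hGentry : ∀ pp pp', (∑ r, (Dm r pp) * (Dm r pp'))
        = ∑ s2, Bm s2 pp * Bm s2 pp' := by
      intro pp pp'
      have e1 : (Dm.conjTranspose * Dm) pp pp' = ∑ r, Dm r pp * Dm r pp' := by
        rw [Matrix.mul_apply]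
        apply Finset.sum_congr rfl; intro r _
        rw [Matrix.conjTranspose_apply, star_trivial]
      have e2 : (Dm.conjTranspose * Dm) pp pp' = ∑ s2, Bm s2 pp * Bm s2 pp' := by
        rw [hBm, Matrix.mul_apply]
        apply Finset.sum_congr rfl; intro s2 _
        rw [Matrix.conjTranspose_apply, star_trivial]
      rw [← e1, e2]
    have hFD : F x w = ∑ r, (∑ pp, Dm r pp * v pp)^2 := by
      have hinner0 : ∀ r, ∑ pp, Dm r pp * v pp
          = ∑ i, (q0 r i * w 0 + q1 r i * w 1) * x i := by
        intro r
        rw [Fintype.sum_prod_type]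
        apply Finset.sum_congr rfl; intro i _
        rw [Fin.sum_univ_two]
        simp only [hDm, Matrix.of_apply, Matrix.cons_val_zero, Matrix.cons_val_one,
          Matrix.head_cons, hv]
        ring
      have hinner : ∀ r, (∑ pp, Dm r pp * v pp)^2
          = (∑ i, (q0 r i * w 0 + q1 r i * w 1) * x i)
            * (∑ i, (q0 r i * w 0 + q1 r i * w 1) * x i) := by
        intro r
        rw [hinner0 r, pow_two]
      rw [Finset.sum_congr rfl (fun r _ => hinner r)]
      rw [triple_swap]
      have hU : ∀ i j, (∑ r, (q0 r i * w 0 + q1 r i * w 1) * (q0 r j * w 0 + q1 r j * w 1))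
          = c' i j * (w 0 * w 0) + b' i j * (w 0 * w 1) + a' i j * (w 1 * w 1) := by
        intro i j
        have hterm : ∀ r, (q0 r i * w 0 + q1 r i * w 1) * (q0 r j * w 0 + q1 r j * w 1)
            = (q0 r i * q0 r j) * (w 0 * w 0)
              + (q0 r i * q1 r j + q1 r i * q0 r j) * (w 0 * w 1)
              + (q1 r i * q1 r j) * (w 1 * w 1) := by
          intro r
          ring
        rw [Finset.sum_congr rfl (fun r _ => hterm r), Finset.sum_add_distrib,
          Finset.sum_add_distrib, ← Finset.sum_mul, ← Finset.sum_mul, ← Finset.sum_mul,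
          ← (hcoeffs i j).1, ← (hcoeffs i j).2.1, ← (hcoeffs i j).2.2]
      rw [Finset.sum_congr rfl (fun i _ => Finset.sum_congr rfl (fun j _ => by rw [hU i j]))]
      have hterm2 : ∀ i j, (c' i j * (w 0 * w 0) + b' i j * (w 0 * w 1)
            + a' i j * (w 1 * w 1)) * x i * x j
          = c' i j * x i * x j * (w 0 * w 0) + b' i j * x i * x j * (w 0 * w 1)
            + a' i j * x i * x j * (w 1 * w 1) := by
        intro i j
        ring
      rw [Finset.sum_congr rfl (fun i _ => Finset.sum_congr rfl (fun j _ => hterm2 i j)),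
        split3, factor_out, factor_out, factor_out, hF]
      simp only [hc', hb', ha']
      rw [symm_sum A x, symm_sum B x, symm_sum C x]
      ring
    rw [hFD, gram_expand Dm v]
    rw [Finset.sum_congr rfl (fun pp _ => Finset.sum_congr rfl
      (fun pp' _ => by rw [hGentry pp pp']))]
    rw [← gram_expand (fun s2 pp => Bm s2 pp) v]
    rw [← Equiv.sum_comp eqv (fun s2 => (∑ pp, Bm s2 pp * v pp)^2)]
    apply Finset.sum_congr rfl; intro tt _
    congr 1
    rw [Fintype.sum_prod_type]
    apply Finset.sum_congr rfl; intro i _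
    apply Finset.sum_congr rfl; intro k _
    simp only [hv]
    ring
end

section
/- Let h be a 2×1×1 degenerated tripartite quartic form, h(x₁, x₂, y, z) = h_2(x₁,x₂,y)z² + h̄_3(x₁,x₂,y)·y·z + h̄_4(x₁,x₂)·y², which is positive semidefinite, and suppose h̄_4 = g₁² for some linear form g₁(x₁,x₂). Then there exists a linear form g₂(x₁,x₂,y) such that identically h̄_3 = 2·g₁·g₂, and the quadratic form h_2 − g₂² in (x₁,x₂,y) is positive semidefinite (hence a sum of squares of 3 linear forms), and identically h(x₁,x₂,y,z) = (g₁(x₁,x₂)·y + g₂(x₁,x₂,y)·z)² + (h_2(x₁,x₂,y) − g₂(x₁,x₂,y)²)·z². -/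
lemma quad_bsq (a b c : ℝ) (hp : ∀ z : ℝ, 0 ≤ a * z ^ 2 + b * z + c) :
    b ^ 2 ≤ 4 * (a * c) := by
  have h := discrim_le_zero (a := a) (b := b) (c := c) (fun x => by
    have := hp x; nlinarith [this])
  simp [discrim] at h
  nlinarith [h]

lemma lin_zero (b c : ℝ) (hp : ∀ z : ℝ, 0 ≤ b * z + c) : b = 0 := by
  by_contra hb
  have h1 := hp ((-(c + 1)) / b)
  rw [mul_div_cancel₀ _ hb] at h1
  linarith

lemma poly_nonneg_punctured (α β γ : ℝ)
    (hp : ∀ t : ℝ, t ≠ 0 → 0 ≤ α + β * t + γ * t ^ 2) : 0 ≤ α := by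
  by_contra hneg
  push_neg at hneg
  have hpos : 0 < -α / (|γ| + 1) := div_pos (by linarith) (by positivity)
  set t := Real.sqrt (-α / (|γ| + 1)) with ht
  have ht2 : t ^ 2 = -α / (|γ| + 1) := Real.sq_sqrt hpos.le
  have htpos : 0 < t := Real.sqrt_pos.mpr hpos
  have h1 := hp t (ne_of_gt htpos)
  have h2 := hp (-t) (by intro hc; nlinarith [htpos])
  have key : 0 ≤ 2 * α + 2 * γ * t ^ 2 := by nlinarith [h1, h2]
  have hg1 : (0:ℝ) < |γ| + 1 := by positivity
  have ht2' : t ^ 2 * (|γ| + 1) = -α := by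
    rw [ht2]; field_simp
  have h5 : 0 ≤ (2 * α + 2 * γ * t ^ 2) * (|γ| + 1) := mul_nonneg key hg1.le
  have h6 : 0 ≤ (|γ| - γ) * (-α) :=
    mul_nonneg (by linarith [le_abs_self γ]) (by linarith)
  nlinarith [h5, h6, ht2']

lemma sos2 (A B C : ℝ) (hp : ∀ y z : ℝ, 0 ≤ A * y ^ 2 + B * (y * z) + C * z ^ 2) :
    ∃ p q r : ℝ, ∀ y z : ℝ,
      A * y ^ 2 + B * (y * z) + C * z ^ 2 = (p * y + q * z) ^ 2 + (r * z) ^ 2 := by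
  have hA : 0 ≤ A := by have := hp 1 0; linarith
  rcases eq_or_lt_of_le hA with hA0 | hA0
  · have hC : 0 ≤ C := by have := hp 0 1; linarith
    have hB : B = 0 := by
      apply lin_zero B C
      intro z; have := hp z 1
      nlinarith [this]
    refine ⟨0, 0, Real.sqrt C, ?_⟩
    intro y z
    rw [← hA0, hB]
    linear_combination (-z ^ 2) * Real.sq_sqrt hC
  · have hA' : A ≠ 0 := ne_of_gt hA0
    have hd : B ^ 2 ≤ 4 * (A * C) := by nlinarith [hp (-B) (2 * A)]
    have hF : 0 ≤ C - B ^ 2 / (4 * A) := by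
      rw [sub_nonneg, div_le_iff₀ (by positivity)]
      nlinarith
    set s := Real.sqrt A with hsdef
    have hs : s ^ 2 = A := Real.sq_sqrt hA
    have hs0 : s ≠ 0 := by
      intro hc; rw [hc] at hs; simp at hs; exact hA' hs.symm
    set r := Real.sqrt (C - B ^ 2 / (4 * A)) with hrdef
    have hr : r ^ 2 = C - B ^ 2 / (4 * A) := Real.sq_sqrt hF
    refine ⟨s, B * s / (2 * A), r, ?_⟩
    intro y z
    have e1 : (s * y + B * s / (2 * A) * z) ^ 2
        = s ^ 2 * y ^ 2 + (B * s ^ 2 / A) * (y * z) + (B ^ 2 * s ^ 2 / (4 * A ^ 2)) * z ^ 2 := by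
      field_simp
      ring
    rw [e1, hs, mul_pow, hr]
    field_simp
    ring

lemma sos3 (A B C D E F : ℝ)
    (hp : ∀ x y z : ℝ, 0 ≤ A * x ^ 2 + B * (x * y) + C * y ^ 2
      + D * (x * z) + E * (y * z) + F * z ^ 2) :
    ∃ l : Fin 3 → Fin 3 → ℝ, ∀ x y z : ℝ,
      A * x ^ 2 + B * (x * y) + C * y ^ 2 + D * (x * z) + E * (y * z) + F * z ^ 2
        = ∑ t : Fin 3, (l t 0 * x + l t 1 * y + l t 2 * z) ^ 2 := by
  have hA : 0 ≤ A := by have := hp 1 0 0; nlinarith [this]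
  rcases eq_or_lt_of_le hA with hA0 | hA0
  · have hB : B = 0 := by
      apply lin_zero B C
      intro x; have := hp x 1 0
      nlinarith [this]
    have hD : D = 0 := by
      apply lin_zero D F
      intro x; have := hp x 0 1
      nlinarith [this]
    obtain ⟨p, q, r, hpqr⟩ := sos2 C E F (fun y z => by
      have := hp 0 y z; nlinarith [this])
    refine ⟨![![0, p, q], ![0, 0, r], ![0, 0, 0]], ?_⟩
    intro x y z
    rw [Fin.sum_univ_three]
    simp only [Matrix.cons_val_zero, Matrix.cons_val_one, Matrix.head_cons,
      Matrix.cons_val_two, Matrix.tail_cons]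
    rw [← hA0, hB, hD]
    linear_combination hpqr y z
  · have hA' : A ≠ 0 := ne_of_gt hA0
    have hq : ∀ y z : ℝ, 0 ≤ (C - B ^ 2 / (4 * A)) * y ^ 2
        + (E - B * D / (2 * A)) * (y * z) + (F - D ^ 2 / (4 * A)) * z ^ 2 := by
      intro y z
      have h0 := hp (-(B * y + D * z) / (2 * A)) y z
      have heq : A * (-(B * y + D * z) / (2 * A)) ^ 2
          + B * (-(B * y + D * z) / (2 * A) * y) + C * y ^ 2
          + D * (-(B * y + D * z) / (2 * A) * z) + E * (y * z) + F * z ^ 2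
          = (C - B ^ 2 / (4 * A)) * y ^ 2 + (E - B * D / (2 * A)) * (y * z)
            + (F - D ^ 2 / (4 * A)) * z ^ 2 := by
        field_simp
        ring
      linarith [heq ▸ h0]
    obtain ⟨p, q, r, hpqr⟩ := sos2 _ _ _ hq
    set s := Real.sqrt A with hsdef
    have hs : s ^ 2 = A := Real.sq_sqrt hA
    have hs0 : s ≠ 0 := by
      intro hc; rw [hc] at hs; simp at hs; exact hA' hs.symm
    refine ⟨![![s, B * s / (2 * A), D * s / (2 * A)], ![0, p, q], ![0, 0, r]], ?_⟩
    intro x y z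
    rw [Fin.sum_univ_three]
    simp only [Matrix.cons_val_zero, Matrix.cons_val_one, Matrix.head_cons,
      Matrix.cons_val_two, Matrix.tail_cons]
    have e1 : (s * x + B * s / (2 * A) * y + D * s / (2 * A) * z) ^ 2
        = s ^ 2 * x ^ 2 + (B * s ^ 2 / A) * (x * y) + (D * s ^ 2 / A) * (x * z)
          + (B ^ 2 * s ^ 2 / (4 * A ^ 2)) * y ^ 2
          + (B * D * s ^ 2 / (2 * A ^ 2)) * (y * z)
          + (D ^ 2 * s ^ 2 / (4 * A ^ 2)) * z ^ 2 := by
      field_simp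
      ring
    have e2 := hpqr y z
    calc A * x ^ 2 + B * (x * y) + C * y ^ 2 + D * (x * z) + E * (y * z) + F * z ^ 2
        = (s * x + B * s / (2 * A) * y + D * s / (2 * A) * z) ^ 2
          + ((C - B ^ 2 / (4 * A)) * y ^ 2 + (E - B * D / (2 * A)) * (y * z)
            + (F - D ^ 2 / (4 * A)) * z ^ 2) := by
          rw [e1, hs]; field_simp; ring
      _ = (s * x + B * s / (2 * A) * y + D * s / (2 * A) * z) ^ 2
          + ((0 * x + p * y + q * z) ^ 2 + (0 * x + 0 * y + r * z) ^ 2) := by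
          rw [e2]; ring
      _ = (s * x + B * s / (2 * A) * y + D * s / (2 * A) * z) ^ 2
          + (0 * x + p * y + q * z) ^ 2 + (0 * x + 0 * y + r * z) ^ 2 := by ring


/-- For a psd 2×1×1 degenerated tripartite quartic form
`h(x₁,x₂,y,z) = h₂(x₁,x₂,y)z² + h̄₃(x₁,x₂,y)·y·z + h̄₄(x₁,x₂)·y²` with
`h̄₄ = g₁²` for a linear form `g₁(x₁,x₂)`, there is a linear form `g₂(x₁,x₂,y)`
such that `h̄₃ = 2g₁g₂`, the quadratic form `h₂ − g₂²` is psd (hence a sum of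
squares of 3 linear forms), and `h = (g₁y + g₂z)² + (h₂ − g₂²)z²`. -/
theorem deg211_h4bar_square_case
    (a11 a12 a22 a1y a2y ayy : ℝ)
    (c11 c12 c22 c1y c2y : ℝ)
    (d11 d12 d22 : ℝ)
    (h2 : ℝ → ℝ → ℝ → ℝ)
    (hh2 : ∀ x1 x2 y, h2 x1 x2 y =
      a11 * x1 ^ 2 + a12 * (x1 * x2) + a22 * x2 ^ 2
        + a1y * (x1 * y) + a2y * (x2 * y) + ayy * y ^ 2)
    (h3bar : ℝ → ℝ → ℝ → ℝ)
    (hh3 : ∀ x1 x2 y, h3bar x1 x2 y =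
      c11 * x1 ^ 2 + c12 * (x1 * x2) + c22 * x2 ^ 2 + c1y * (x1 * y) + c2y * (x2 * y))
    (h4bar : ℝ → ℝ → ℝ)
    (hh4 : ∀ x1 x2, h4bar x1 x2 = d11 * x1 ^ 2 + d12 * (x1 * x2) + d22 * x2 ^ 2)
    (h : ℝ → ℝ → ℝ → ℝ → ℝ)
    (hh : ∀ x1 x2 y z, h x1 x2 y z =
      h2 x1 x2 y * z ^ 2 + h3bar x1 x2 y * (y * z) + h4bar x1 x2 * y ^ 2)
    (hpsd : ∀ x1 x2 y z, 0 ≤ h x1 x2 y z)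
    (e1 e2 : ℝ)
    (hsq : ∀ x1 x2, h4bar x1 x2 = (e1 * x1 + e2 * x2) ^ 2) :
    ∃ g21 g22 g23 : ℝ,
      (∀ x1 x2 y, h3bar x1 x2 y =
        2 * ((e1 * x1 + e2 * x2) * (g21 * x1 + g22 * x2 + g23 * y))) ∧
      (∀ x1 x2 y, 0 ≤ h2 x1 x2 y - (g21 * x1 + g22 * x2 + g23 * y) ^ 2) ∧
      (∃ l : Fin 3 → Fin 3 → ℝ, ∀ x1 x2 y,
        h2 x1 x2 y - (g21 * x1 + g22 * x2 + g23 * y) ^ 2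
          = ∑ t, (l t 0 * x1 + l t 1 * x2 + l t 2 * y) ^ 2) ∧
      (∀ x1 x2 y z, h x1 x2 y z =
        ((e1 * x1 + e2 * x2) * y + (g21 * x1 + g22 * x2 + g23 * y) * z) ^ 2
          + (h2 x1 x2 y - (g21 * x1 + g22 * x2 + g23 * y) ^ 2) * z ^ 2) := by
  -- pointwise quadratic-in-z nonnegativity
  have hzq : ∀ x1 x2 y z : ℝ,
      0 ≤ h2 x1 x2 y * z ^ 2 + (h3bar x1 x2 y * y) * z + (e1 * x1 + e2 * x2) ^ 2 * y ^ 2 := by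
    intro x1 x2 y z
    have h0 := hpsd x1 x2 y z
    rw [hh, hsq] at h0
    nlinarith [h0]
  -- the common final packaging
  have final : ∀ g21 g22 g23 : ℝ,
      (∀ x1 x2 y, h3bar x1 x2 y =
        2 * ((e1 * x1 + e2 * x2) * (g21 * x1 + g22 * x2 + g23 * y))) →
      (∀ x1 x2 y, 0 ≤ h2 x1 x2 y - (g21 * x1 + g22 * x2 + g23 * y) ^ 2) →
      (∃ g21' g22' g23' : ℝ,
        (∀ x1 x2 y, h3bar x1 x2 y =
          2 * ((e1 * x1 + e2 * x2) * (g21' * x1 + g22' * x2 + g23' * y))) ∧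
        (∀ x1 x2 y, 0 ≤ h2 x1 x2 y - (g21' * x1 + g22' * x2 + g23' * y) ^ 2) ∧
        (∃ l : Fin 3 → Fin 3 → ℝ, ∀ x1 x2 y,
          h2 x1 x2 y - (g21' * x1 + g22' * x2 + g23' * y) ^ 2
            = ∑ t, (l t 0 * x1 + l t 1 * x2 + l t 2 * y) ^ 2) ∧
        (∀ x1 x2 y z, h x1 x2 y z =
          ((e1 * x1 + e2 * x2) * y + (g21' * x1 + g22' * x2 + g23' * y) * z) ^ 2
            + (h2 x1 x2 y - (g21' * x1 + g22' * x2 + g23' * y) ^ 2) * z ^ 2)) := by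
    intro g21 g22 g23 h3eq hpsdq
    refine ⟨g21, g22, g23, h3eq, hpsdq, ?_, ?_⟩
    · obtain ⟨l, hl⟩ := sos3 (a11 - g21 ^ 2) (a12 - 2 * g21 * g22) (a22 - g22 ^ 2)
        (a1y - 2 * g21 * g23) (a2y - 2 * g22 * g23) (ayy - g23 ^ 2) (fun x1 x2 y => by
          have h0 := hpsdq x1 x2 y
          rw [hh2] at h0
          exact h0.trans_eq (by ring))
      refine ⟨l, fun x1 x2 y => ?_⟩
      rw [hh2, ← hl x1 x2 y]
      ring
    · intro x1 x2 y z
      rw [hh, hsq, h3eq]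
      ring
  by_cases he : e1 = 0 ∧ e2 = 0
  · -- degenerate case g₁ = 0
    obtain ⟨he1, he2⟩ := he
    subst he1; subst he2
    have hv : ∀ x1 x2 y : ℝ, h3bar x1 x2 y * y = 0 := by
      intro x1 x2 y
      have hb := quad_bsq _ _ _ (fun z => hzq x1 x2 y z)
      have hz : ((0:ℝ) * x1 + 0 * x2) ^ 2 * y ^ 2 = 0 := by ring
      rw [hz] at hb
      have h1 : (h3bar x1 x2 y * y) ^ 2 = 0 := le_antisymm (by nlinarith [hb]) (sq_nonneg _)
      exact sq_eq_zero_iff.mp h1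
    have h3zero : ∀ x1 x2 y : ℝ, h3bar x1 x2 y = 0 := by
      intro x1 x2 y
      have t1 := hv x1 x2 1
      have t2 := hv x1 x2 (-1)
      rw [hh3] at t1 t2 ⊢
      linear_combination ((1 + y) / 2) * t1 - ((1 - y) / 2) * t2
    apply final 0 0 0
    · intro x1 x2 y
      rw [h3zero x1 x2 y]; ring
    · intro x1 x2 y
      have h0 := hpsd x1 x2 y 1
      rw [hh, hsq, h3zero] at h0
      nlinarith [h0]
  · -- nondegenerate case
    have hE : 0 < e1 ^ 2 + e2 ^ 2 := by
      rcases not_and_or.mp he with h' | h'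
      · have := lt_of_le_of_ne (sq_nonneg e1) (Ne.symm (pow_ne_zero 2 h'))
        nlinarith [sq_nonneg e2]
      · have := lt_of_le_of_ne (sq_nonneg e2) (Ne.symm (pow_ne_zero 2 h'))
        nlinarith [sq_nonneg e1]
    have hE' : (e1 ^ 2 + e2 ^ 2 : ℝ) ≠ 0 := ne_of_gt hE
    -- relations R = 0 and S = 0 from vanishing on the line g₁ = 0
    have hline : ∀ y : ℝ, h3bar (-e2) e1 y * y = 0 := by
      intro y
      have hb := quad_bsq _ _ _ (fun z => hzq (-e2) e1 y z)
      have hz : (e1 * (-e2) + e2 * e1) ^ 2 * y ^ 2 = 0 := by ring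
      rw [hz] at hb
      have h1 : (h3bar (-e2) e1 y * y) ^ 2 = 0 := le_antisymm (by nlinarith [hb]) (sq_nonneg _)
      exact sq_eq_zero_iff.mp h1
    have t1 := hline 1
    have t2 := hline (-1)
    rw [hh3] at t1 t2
    have hR : c11 * e2 ^ 2 - c12 * (e1 * e2) + c22 * e1 ^ 2 = 0 := by
      linear_combination t1 / 2 - t2 / 2
    have hS : c2y * e1 - c1y * e2 = 0 := by
      linear_combination t1 / 2 + t2 / 2
    set E := e1 ^ 2 + e2 ^ 2 with hEdef
    set K := e1 ^ 2 * c11 + e1 * e2 * c12 + e2 ^ 2 * c22 with hKdef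
    set G21 := (E * (2 * e1 * c11 + e2 * c12) - e1 * K) / (2 * E ^ 2) with hG21
    set G22 := (E * (e1 * c12 + 2 * e2 * c22) - e2 * K) / (2 * E ^ 2) with hG22
    set G23 := (e1 * c1y + e2 * c2y) / (2 * E) with hG23
    have h3eq : ∀ x1 x2 y : ℝ, h3bar x1 x2 y =
        2 * ((e1 * x1 + e2 * x2) * (G21 * x1 + G22 * x2 + G23 * y)) := by
      intro x1 x2 y
      rw [hh3, hG21, hG22, hG23, hKdef, hEdef]
      have hE'' : e1 ^ 2 + e2 ^ 2 ≠ 0 := hE'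
      field_simp
      linear_combination (1/4) * (4 * 1 * (e2 * x1 - e1 * x2) ^ 2) * hR
        + (1/4) * (4 * (e1 ^ 2 + e2 ^ 2) * (e1 * x2 - e2 * x1) * y) * hS
    -- base psd fact away from the bad locus
    have hbase : ∀ x1 x2 y : ℝ, e1 * x1 + e2 * x2 ≠ 0 → y ≠ 0 →
        0 ≤ h2 x1 x2 y - (G21 * x1 + G22 * x2 + G23 * y) ^ 2 := by
      intro x1 x2 y hu hy
      have hb := quad_bsq _ _ _ (fun z => hzq x1 x2 y z)
      rw [h3eq x1 x2 y] at hb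
      have hpos : 0 < (e1 * x1 + e2 * x2) ^ 2 * y ^ 2 := by positivity
      nlinarith [hb, hpos]
    -- perturbation principle
    have hper : ∀ x1 x2 y d1 d2 d3 : ℝ,
        (∀ t : ℝ, t ≠ 0 → 0 ≤ h2 (x1 + t * d1) (x2 + t * d2) (y + t * d3)
          - (G21 * (x1 + t * d1) + G22 * (x2 + t * d2) + G23 * (y + t * d3)) ^ 2) →
        0 ≤ h2 x1 x2 y - (G21 * x1 + G22 * x2 + G23 * y) ^ 2 := by
      intro x1 x2 y d1 d2 d3 hF
      have hFP : ∀ t : ℝ, h2 (x1 + t * d1) (x2 + t * d2) (y + t * d3)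
          - (G21 * (x1 + t * d1) + G22 * (x2 + t * d2) + G23 * (y + t * d3)) ^ 2
          = (h2 x1 x2 y - (G21 * x1 + G22 * x2 + G23 * y) ^ 2)
            + ((h2 (x1 + 1 * d1) (x2 + 1 * d2) (y + 1 * d3)
                - (G21 * (x1 + 1 * d1) + G22 * (x2 + 1 * d2) + G23 * (y + 1 * d3)) ^ 2)
              - (h2 (x1 + (-1) * d1) (x2 + (-1) * d2) (y + (-1) * d3)
                - (G21 * (x1 + (-1) * d1) + G22 * (x2 + (-1) * d2) + G23 * (y + (-1) * d3)) ^ 2)) / 2 * t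
            + (((h2 (x1 + 1 * d1) (x2 + 1 * d2) (y + 1 * d3)
                - (G21 * (x1 + 1 * d1) + G22 * (x2 + 1 * d2) + G23 * (y + 1 * d3)) ^ 2)
              + (h2 (x1 + (-1) * d1) (x2 + (-1) * d2) (y + (-1) * d3)
                - (G21 * (x1 + (-1) * d1) + G22 * (x2 + (-1) * d2) + G23 * (y + (-1) * d3)) ^ 2)) / 2
              - (h2 x1 x2 y - (G21 * x1 + G22 * x2 + G23 * y) ^ 2)) * t ^ 2 := by
        intro t
        simp only [hh2]
        ring
      apply poly_nonneg_punctured _ _ _ (fun t ht => by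
        rw [← hFP t]; exact hF t ht)
    have hall : ∀ x1 x2 y : ℝ, 0 ≤ h2 x1 x2 y - (G21 * x1 + G22 * x2 + G23 * y) ^ 2 := by
      intro x1 x2 y
      by_cases hu : e1 * x1 + e2 * x2 = 0
      · by_cases hy : y = 0
        · apply hper x1 x2 y e1 e2 1
          intro t ht
          apply hbase
          · have : e1 * (x1 + t * e1) + e2 * (x2 + t * e2)
                = (e1 * x1 + e2 * x2) + t * E := by rw [hEdef]; ring
            rw [this, hu]
            simpa using mul_ne_zero ht hE'
          · rw [hy]; simpa using ht
        · apply hper x1 x2 y e1 e2 0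
          intro t ht
          apply hbase
          · have : e1 * (x1 + t * e1) + e2 * (x2 + t * e2)
                = (e1 * x1 + e2 * x2) + t * E := by rw [hEdef]; ring
            rw [this, hu]
            simpa using mul_ne_zero ht hE'
          · simpa using hy
      · by_cases hy : y = 0
        · apply hper x1 x2 y 0 0 1
          intro t ht
          apply hbase
          · have : e1 * (x1 + t * 0) + e2 * (x2 + t * 0) = e1 * x1 + e2 * x2 := by ring
            rw [this]; exact hu
          · rw [hy]; simpa using ht
        · exact hbase x1 x2 y hu hy
    exact final G21 G22 G23 h3eq hall
end

section
/- Let h be a 2×1×1 degenerated tripartite quartic form, h(x₁, x₂, y, z) = h_2(x₁,x₂,y)z² + h̄_3(x₁,x₂,y)·y·z + h̄_4(x₁,x₂)·y², which is positive semidefinite, and suppose h̄_4 is the square of a linear form on ℝ². Then h can be expressed as a sum of at most 4 squares of quadratic forms in the four variables (x₁, x₂, y, z). -/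
/-- A linear function bounded below has zero slope. -/
lemma lin_slope_zero (m c : ℝ) (h : ∀ t, 0 ≤ m * t + c) : m = 0 := by
  by_contra hm
  have h1 := h ((-c - 1) / m)
  rw [mul_div_cancel₀ _ hm] at h1
  linarith

/-- If a quadratic is nonneg everywhere, its leading coefficient is nonneg. -/
lemma quad_lead_nonneg (a b c : ℝ) (h : ∀ z, 0 ≤ a * z ^ 2 + b * z + c) : 0 ≤ a := by
  by_contra ha
  push_neg at ha
  have hd : discrim a b c ≤ 0 := by
    apply discrim_le_zero
    intro x
    have := h x
    nlinarith [this]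
  rw [discrim] at hd
  have hc : 0 ≤ c := by have := h 0; nlinarith
  have hc0 : c = 0 := by nlinarith
  have hb0 : b = 0 := by nlinarith
  have := h 1
  nlinarith

/-- Density argument in one real variable. -/
lemma dense1d (F : ℝ → ℝ) (hF : Continuous F) (t1 t2 : ℝ)
    (h : ∀ t, t ≠ t1 → t ≠ t2 → 0 ≤ F t) (t : ℝ) : 0 ≤ F t := by
  have hd : Dense (({t1}ᶜ : Set ℝ) \ {t2}) := (dense_compl_singleton t1).diff_singleton t2
  have hcl : IsClosed {s : ℝ | 0 ≤ F s} := isClosed_le continuous_const hF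
  have hsub : (({t1}ᶜ : Set ℝ) \ {t2}) ⊆ {s : ℝ | 0 ≤ F s} := fun s hs => h s hs.1 hs.2
  exact (hcl.closure_subset_iff.mpr hsub) (hd t)

/-- A psd binary quadratic form is a sum of two squares of linear forms. -/
lemma psd2 (b c f : ℝ) (h : ∀ y z : ℝ, 0 ≤ b * y ^ 2 + f * (y * z) + c * z ^ 2) :
    ∃ u v : Fin 2 → ℝ, ∀ y z : ℝ,
      b * y ^ 2 + f * (y * z) + c * z ^ 2 = ∑ k, (u k * y + v k * z) ^ 2 := by
  have hb : 0 ≤ b := by have := h 1 0; nlinarith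
  rcases eq_or_lt_of_le hb with hb0 | hbpos
  · -- b = 0
    have hf : f = 0 := by
      apply lin_slope_zero f c
      intro t
      have := h t 1
      nlinarith
    have hc : 0 ≤ c := by have := h 0 1; nlinarith
    refine ⟨![0, 0], ![Real.sqrt c, 0], ?_⟩
    intro y z
    have hcs := Real.sq_sqrt hc
    simp only [Fin.sum_univ_two, Matrix.cons_val_zero, Matrix.cons_val_one, Matrix.head_cons]
    linear_combination (y*z)*hf - (y^2)*hb0 - (z^2)*hcs
  · -- b > 0
    have hdisc : f ^ 2 ≤ 4 * b * c := by
      have hd : discrim b f c ≤ 0 := by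
        apply discrim_le_zero
        intro x
        have := h x 1
        nlinarith
      rw [discrim] at hd; nlinarith
    set s := Real.sqrt b with hs
    have hs2 : s ^ 2 = b := Real.sq_sqrt hb
    have hsne : s ≠ 0 := by
      intro h0; rw [h0] at hs2; simp at hs2; linarith
    have hq : 0 ≤ c - f ^ 2 / (4 * b) := by
      rw [sub_nonneg, div_le_iff₀ (by linarith)]
      nlinarith
    set q := Real.sqrt (c - f ^ 2 / (4 * b)) with hqd
    have hq2 : q ^ 2 = c - f ^ 2 / (4 * b) := Real.sq_sqrt hq
    refine ⟨![s, 0], ![f / (2 * s), q], ?_⟩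
    intro y z
    have hcross : s * (f / (2 * s)) = f / 2 := by field_simp
    have hvsq : (f / (2 * s)) ^ 2 = f ^ 2 / (4 * b) := by
      rw [div_pow, mul_pow, hs2]; norm_num
    simp only [Fin.sum_univ_two, Matrix.cons_val_zero, Matrix.cons_val_one, Matrix.head_cons]
    linear_combination -(y^2)*hs2 - (2*y*z)*hcross - (z^2)*hvsq - (z^2)*hq2

/-- A psd ternary quadratic form is a sum of three squares of linear forms. -/
lemma psd3 (a b c d e f : ℝ)
    (h : ∀ x y z : ℝ, 0 ≤ a * x ^ 2 + b * y ^ 2 + c * z ^ 2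
        + d * (x * y) + e * (x * z) + f * (y * z)) :
    ∃ u v w : Fin 3 → ℝ, ∀ x y z : ℝ,
      a * x ^ 2 + b * y ^ 2 + c * z ^ 2 + d * (x * y) + e * (x * z) + f * (y * z)
        = ∑ k, (u k * x + v k * y + w k * z) ^ 2 := by
  have ha : 0 ≤ a := by have := h 1 0 0; nlinarith
  rcases eq_or_lt_of_le ha with ha0 | hapos
  · -- a = 0
    have hd0 : d = 0 := by
      apply lin_slope_zero d b; intro t; have := h t 1 0; nlinarith
    have he0 : e = 0 := by
      apply lin_slope_zero e c; intro t; have := h t 0 1; nlinarith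
    obtain ⟨u', v', hsum⟩ := psd2 b c f (fun y z => by have := h 0 y z; nlinarith)
    refine ⟨![0, 0, 0], ![u' 0, u' 1, 0], ![v' 0, v' 1, 0], ?_⟩
    intro x y z
    have hs := hsum y z
    simp only [Fin.sum_univ_two, Fin.sum_univ_three, Matrix.cons_val_zero,
      Matrix.cons_val_one, Matrix.head_cons, Matrix.cons_val_two, Matrix.tail_cons] at hs ⊢
    linear_combination hs - (x^2)*ha0 + (x*y)*hd0 + (x*z)*he0
  · -- a > 0
    set b' := b - d ^ 2 / (4 * a) with hb'
    set c' := c - e ^ 2 / (4 * a) with hc'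
    set f' := f - d * e / (2 * a) with hf'
    have h' : ∀ y z : ℝ, 0 ≤ b' * y ^ 2 + f' * (y * z) + c' * z ^ 2 := by
      intro y z
      have hx := h (-(d * y + e * z) / (2 * a)) y z
      have heq : a * (-(d * y + e * z) / (2 * a)) ^ 2 + b * y ^ 2 + c * z ^ 2
          + d * ((-(d * y + e * z) / (2 * a)) * y) + e * ((-(d * y + e * z) / (2 * a)) * z)
          + f * (y * z) = b' * y ^ 2 + f' * (y * z) + c' * z ^ 2 := by
        rw [hb', hc', hf']; field_simp; ring
      linarith [heq ▸ hx]
    obtain ⟨u', v', hsum⟩ := psd2 b' c' f' h'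
    set s := Real.sqrt a with hs
    have hs2 : s ^ 2 = a := Real.sq_sqrt ha
    have hsne : s ≠ 0 := by intro h0; rw [h0] at hs2; simp at hs2; linarith
    have hcd : s * (d / (2 * s)) = d / 2 := by field_simp
    have hce : s * (e / (2 * s)) = e / 2 := by field_simp
    have hdd : (d / (2 * s)) ^ 2 = d ^ 2 / (4 * a) := by rw [div_pow, mul_pow, hs2]; norm_num
    have hee : (e / (2 * s)) ^ 2 = e ^ 2 / (4 * a) := by rw [div_pow, mul_pow, hs2]; norm_num
    have hde : (d / (2 * s)) * (e / (2 * s)) = d * e / (4 * a) := by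
      rw [div_mul_div_comm, show (2*s)*(2*s) = 4 * s^2 by ring, hs2]
    refine ⟨![s, 0, 0], ![d / (2 * s), u' 0, u' 1], ![e / (2 * s), v' 0, v' 1], ?_⟩
    intro x y z
    have hsm := hsum y z
    simp only [Fin.sum_univ_two, Fin.sum_univ_three, Matrix.cons_val_zero,
      Matrix.cons_val_one, Matrix.head_cons, Matrix.cons_val_two, Matrix.tail_cons] at hsm ⊢
    rw [hb', hc', hf'] at hsm
    linear_combination hsm - (x^2)*hs2 - (2*x*y)*hcd - (2*x*z)*hce - (y^2)*hdd - (z^2)*hee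
      - (2*y*z)*hde

/-- A psd 2×1×1 degenerated tripartite quartic form
`h(x₁,x₂,y,z) = h₂(x₁,x₂,y)z² + h̄₃(x₁,x₂,y)·y·z + h̄₄(x₁,x₂)·y²` with
`h̄₄` a square of a linear form on ℝ² is a sum of at most 4 squares of quadratic
forms in the four variables (x₁,x₂,y,z). -/
theorem deg211_h4bar_square_sos_rank_four
    (a11 a12 a22 a1y a2y ayy : ℝ)
    (c11 c12 c22 c1y c2y : ℝ)
    (d11 d12 d22 : ℝ)
    (h2 : ℝ → ℝ → ℝ → ℝ)
    (hh2 : ∀ x1 x2 y, h2 x1 x2 y =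
      a11 * x1 ^ 2 + a12 * (x1 * x2) + a22 * x2 ^ 2
        + a1y * (x1 * y) + a2y * (x2 * y) + ayy * y ^ 2)
    (h3bar : ℝ → ℝ → ℝ → ℝ)
    (hh3 : ∀ x1 x2 y, h3bar x1 x2 y =
      c11 * x1 ^ 2 + c12 * (x1 * x2) + c22 * x2 ^ 2 + c1y * (x1 * y) + c2y * (x2 * y))
    (h4bar : ℝ → ℝ → ℝ)
    (hh4 : ∀ x1 x2, h4bar x1 x2 = d11 * x1 ^ 2 + d12 * (x1 * x2) + d22 * x2 ^ 2)
    (h : ℝ → ℝ → ℝ → ℝ → ℝ)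
    (hh : ∀ x1 x2 y z, h x1 x2 y z =
      h2 x1 x2 y * z ^ 2 + h3bar x1 x2 y * (y * z) + h4bar x1 x2 * y ^ 2)
    (hpsd : ∀ x1 x2 y z, 0 ≤ h x1 x2 y z)
    (hsq : ∃ e1 e2 : ℝ, ∀ x1 x2, h4bar x1 x2 = (e1 * x1 + e2 * x2) ^ 2) :
    ∃ Q : Fin 4 → Fin 4 → Fin 4 → ℝ,
      ∀ x1 x2 y z, h x1 x2 y z =
        ∑ t, (∑ i, ∑ j, Q t i j * ![x1, x2, y, z] i * ![x1, x2, y, z] j) ^ 2 := by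
  obtain ⟨e1, e2, he⟩ := hsq
  -- quadratic-in-z positivity
  have hquad : ∀ x1 x2 y z : ℝ, 0 ≤ h2 x1 x2 y * z ^ 2 + (h3bar x1 x2 y * y) * z
      + (e1 * x1 + e2 * x2) ^ 2 * y ^ 2 := by
    intro x1 x2 y z
    have H := hpsd x1 x2 y z
    rw [hh, he] at H
    nlinarith [H]
  -- discriminant inequality
  have key : ∀ x1 x2 y : ℝ, (h3bar x1 x2 y * y) ^ 2
      ≤ 4 * h2 x1 x2 y * ((e1 * x1 + e2 * x2) ^ 2 * y ^ 2) := by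
    intro x1 x2 y
    have hd := discrim_le_zero (a := h2 x1 x2 y) (b := h3bar x1 x2 y * y)
      (c := (e1 * x1 + e2 * x2) ^ 2 * y ^ 2) (fun x => by nlinarith [hquad x1 x2 y x])
    rw [discrim] at hd
    nlinarith [hd]
  have key' : ∀ x1 x2 y : ℝ, y ≠ 0 →
      (h3bar x1 x2 y) ^ 2 ≤ 4 * h2 x1 x2 y * (e1 * x1 + e2 * x2) ^ 2 := by
    intro x1 x2 y hy
    have hk := key x1 x2 y
    have hy2 : (0:ℝ) < y ^ 2 := by positivity
    have h1 : (h3bar x1 x2 y) ^ 2 * y ^ 2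
        ≤ (4 * h2 x1 x2 y * (e1 * x1 + e2 * x2) ^ 2) * y ^ 2 := by nlinarith [hk]
    exact le_of_mul_le_mul_right h1 hy2
  have hzgood : ∀ x1 x2 y, 0 ≤ h2 x1 x2 y := by
    intro x1 x2 y
    exact quad_lead_nonneg _ _ _ (fun z => hquad x1 x2 y z)
  -- density argument for the residual quadratic form
  have hpgen : ∀ g1 g2 g3 : ℝ,
      (∀ x1 x2 y, h3bar x1 x2 y = (e1 * x1 + e2 * x2) * (g1 * x1 + g2 * x2 + g3 * y)) →
      0 < e1 ^ 2 + e2 ^ 2 →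
      ∀ x1 x2 y, 0 ≤ 4 * h2 x1 x2 y - (g1 * x1 + g2 * x2 + g3 * y) ^ 2 := by
    intro g1 g2 g3 hg hne x1 x2 y
    set P : ℝ → ℝ → ℝ → ℝ := fun s1 s2 t =>
      4 * (a11 * s1 ^ 2 + a12 * (s1 * s2) + a22 * s2 ^ 2
        + a1y * (s1 * t) + a2y * (s2 * t) + ayy * t ^ 2)
        - (g1 * s1 + g2 * s2 + g3 * t) ^ 2 with hP
    have hP2 : ∀ s1 s2 t, P s1 s2 t
        = 4 * h2 s1 s2 t - (g1 * s1 + g2 * s2 + g3 * t) ^ 2 := by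
      intro s1 s2 t; rw [hh2]
    have hPd : ∀ s1 s2 t, (e1 * s1 + e2 * s2) ≠ 0 → t ≠ 0 → 0 ≤ P s1 s2 t := by
      intro s1 s2 t hl ht
      have hk := key' s1 s2 t ht
      rw [hg] at hk
      have hl2 : (0:ℝ) < (e1 * s1 + e2 * s2) ^ 2 := by positivity
      rw [hP2]
      nlinarith [hk, hl2]
    have hF : Continuous (fun t : ℝ => P (x1 + e1 * t) (x2 + e2 * t) (y + t)) := by
      simp only [hP]; fun_prop
    have hnn := dense1d _ hF (-(e1 * x1 + e2 * x2) / (e1 ^ 2 + e2 ^ 2)) (-y) ?_ 0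
    · simp only [mul_zero, add_zero] at hnn
      rw [hP2] at hnn
      exact hnn
    · intro t ht1 ht2
      apply hPd
      · intro hl0
        apply ht1
        have hl1 : (e1 * x1 + e2 * x2) + (e1 ^ 2 + e2 ^ 2) * t = 0 := by
          linear_combination hl0
        field_simp
        linarith [hl1]
      · intro hy0
        apply ht2
        linarith [hy0]
  -- factorization of h3bar
  obtain ⟨g1, g2, g3, hg, hp⟩ : ∃ g1 g2 g3 : ℝ,
      (∀ x1 x2 y, h3bar x1 x2 y = (e1 * x1 + e2 * x2) * (g1 * x1 + g2 * x2 + g3 * y)) ∧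
      (∀ x1 x2 y, 0 ≤ 4 * h2 x1 x2 y - (g1 * x1 + g2 * x2 + g3 * y) ^ 2) := by
    by_cases he1 : e1 = 0
    · by_cases he2 : e2 = 0
      · refine ⟨0, 0, 0, ?_, ?_⟩
        · have hz : ∀ s1 s2 (t : ℝ), t ≠ 0 → h3bar s1 s2 t = 0 := by
            intro s1 s2 t ht
            have hk := key' s1 s2 t ht
            rw [he1, he2] at hk
            nlinarith [sq_nonneg (h3bar s1 s2 t), hk]
          intro x1 x2 y
          have hA := hz x1 x2 1 one_ne_zero
          have hB := hz x1 x2 2 two_ne_zero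
          rw [hh3] at hA hB
          rw [hh3]
          linear_combination (2 - y) * hA + (y - 1) * hB
        · intro x1 x2 y
          have := hzgood x1 x2 y
          nlinarith [this]
      · -- e1 = 0, e2 ≠ 0
        have hz : ∀ (t u : ℝ), u ≠ 0 → h3bar t 0 u = 0 := by
          intro t u hu
          have hk := key' t 0 u hu
          rw [he1] at hk
          nlinarith [sq_nonneg (h3bar t 0 u), hk]
        have hA := hz 1 1 one_ne_zero
        have hB := hz 1 2 two_ne_zero
        rw [hh3] at hA hB
        have hc11 : c11 = 0 := by linear_combination 2 * hA - hB
        have hc1y : c1y = 0 := by linear_combination hB - hA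
        refine ⟨c12 / e2, c22 / e2, c2y / e2, ?_, ?_⟩
        · intro x1 x2 y
          rw [hh3, he1]
          field_simp
          linear_combination (e2 * x1 ^ 2) * hc11 + (e2 * (x1 * y)) * hc1y
        · apply hpgen
          · intro x1 x2 y
            rw [hh3, he1]
            field_simp
            linear_combination (e2 * x1 ^ 2) * hc11 + (e2 * (x1 * y)) * hc1y
          · have : (0:ℝ) < e2 ^ 2 := sq_pos_of_ne_zero he2
            nlinarith [sq_nonneg e1, this]
    · -- e1 ≠ 0
      have hz : ∀ (t u : ℝ), u ≠ 0 → h3bar (-e2 * t) (e1 * t) u = 0 := by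
        intro t u hu
        have hk := key' (-e2 * t) (e1 * t) u hu
        have hl : e1 * (-e2 * t) + e2 * (e1 * t) = 0 := by ring
        rw [hl] at hk
        nlinarith [sq_nonneg (h3bar (-e2 * t) (e1 * t) u), hk]
      have hA := hz 1 1 one_ne_zero
      have hB := hz 1 2 two_ne_zero
      rw [hh3] at hA hB
      have hP0 : c11 * e2 ^ 2 - c12 * (e1 * e2) + c22 * e1 ^ 2 = 0 := by
        linear_combination 2 * hA - hB
      have hR0 : c2y * e1 - c1y * e2 = 0 := by
        linear_combination hB - hA
      refine ⟨c11 / e1, (c12 * e1 - c11 * e2) / e1 ^ 2, c1y / e1, ?_, ?_⟩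
      · intro x1 x2 y
        rw [hh3]
        field_simp
        linear_combination (x2 ^ 2) * hP0 + (e1 * (x2 * y)) * hR0
      · apply hpgen
        · intro x1 x2 y
          rw [hh3]
          field_simp
          linear_combination (x2 ^ 2) * hP0 + (e1 * (x2 * y)) * hR0
        · have : (0:ℝ) < e1 ^ 2 := sq_pos_of_ne_zero he1
          nlinarith [sq_nonneg e2, this]
  -- residual quadratic form is SOS
  obtain ⟨u, v, w, hsum⟩ := psd3 (4 * a11 - g1 ^ 2) (4 * a22 - g2 ^ 2) (4 * ayy - g3 ^ 2)
      (4 * a12 - 2 * g1 * g2) (4 * a1y - 2 * g1 * g3) (4 * a2y - 2 * g2 * g3)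
      (by
        intro x y z
        have hpp := hp x y z
        rw [hh2] at hpp
        nlinarith [hpp])
  have E4 : ∀ x1 x2 y : ℝ, 4 * h2 x1 x2 y - (g1 * x1 + g2 * x2 + g3 * y) ^ 2 =
      (u 0 * x1 + v 0 * x2 + w 0 * y) ^ 2 + (u 1 * x1 + v 1 * x2 + w 1 * y) ^ 2
        + (u 2 * x1 + v 2 * x2 + w 2 * y) ^ 2 := by
    intro x1 x2 y
    have hs := hsum x1 x2 y
    rw [Fin.sum_univ_three] at hs
    rw [hh2]
    linear_combination hs
  refine ⟨![![![0,0,e1,g1/2],![0,0,e2,g2/2],![0,0,0,g3/2],![0,0,0,0]],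
           ![![0,0,0,u 0/2],![0,0,0,v 0/2],![0,0,0,w 0/2],![0,0,0,0]],
           ![![0,0,0,u 1/2],![0,0,0,v 1/2],![0,0,0,w 1/2],![0,0,0,0]],
           ![![0,0,0,u 2/2],![0,0,0,v 2/2],![0,0,0,w 2/2],![0,0,0,0]]], ?_⟩
  intro x1 x2 y z
  rw [hh, hg, he]
  have hE := E4 x1 x2 y
  simp only [Fin.sum_univ_four, Matrix.cons_val_zero, Matrix.cons_val_one, Matrix.head_cons,
    Matrix.cons_val_two, Matrix.tail_cons, Matrix.cons_val_three]
  linear_combination (z ^ 2 / 4) * hE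
end
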